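/- arXiv:2003.03144 — 12 statements merged into one kernel-verified Lean document; each statement's English description precedes it below -/
import Mathlib

section
/- Suppose X is a Tychonoff space such that X^n has the Menger property for every n ∈ ω, A is a countable subset of C_p(X) containing the zero function 0, and 0 is a limit point of A. Then the family 𝒰 = {U ⊆ A : 0 ∈ Int_A(U)} is Menger as a subspace of 𝒫(A), where Int_A denotes interior in the subspace topology that A inherits from C_p(X). -/
open Set Topology Filter

/-- A topological space is *Menger* if for every sequence of open covers there are finite
subfamilies whose unions form a cover. -/
def IsMenger (X : Type*) [TopologicalSpace X] : Prop :=
  ∀ U : ℕ → Set (Set X),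
    (∀ n, ∀ u ∈ U n, IsOpen u) → (∀ n, ⋃₀ U n = Set.univ) →
    ∃ V : ℕ → Set (Set X),
      (∀ n, V n ⊆ U n ∧ (V n).Finite) ∧ (⋃ n, ⋃₀ V n) = Set.univ

/-- The Menger property for a subspace. -/
def IsMengerSet {X : Type*} [TopologicalSpace X] (S : Set X) : Prop :=
  IsMenger ↥S

/-- The Cantor-space topology on the power set `𝒫(α)`, identifying a subset with its
characteristic function in the product of discrete two-point spaces. -/
def cantorTop (α : Type*) : TopologicalSpace (Set α) :=
  TopologicalSpace.induced (fun (S : Set α) (a : α) => a ∈ S)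
    (@Pi.topologicalSpace α (fun _ => Prop) (fun _ => ⊥))

/-- `C_p(X)`: continuous real-valued functions with the topology of pointwise convergence,
i.e. the subspace topology inherited from `ℝ^X`. -/
abbrev Cp (X : Type*) [TopologicalSpace X] : Type _ := {f : X → ℝ // Continuous f}

/-- The zero function as an element of `C_p(X)`. -/
instance (X : Type*) [TopologicalSpace X] : Zero (Cp X) :=
  ⟨⟨fun _ => 0, continuous_const⟩⟩

/-!
Every neighbourhood of `0` in `A` contains a basic one, `B(x̄, k) = {a | |a(xᵢ)| < 1/(k+1) ∀ i}`
with `x̄ ∈ Xᵐ`. As `𝒰` is upward closed, it is the union over `(m, k)` of the images of `Xᵐ`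
under the set-valued maps `x̄ ↦ {U ∈ 𝒰 | B(x̄, k) ⊆ U}`. These have compact values (upward cones
are closed in the compact space `𝒫(A)`) and are upper semicontinuous: an open set containing the
cone above `B(x̄, k)` contains the cone above a finite `s ⊆ B(x̄, k)`, and `s ⊆ B(ȳ, k)` for all
`ȳ` near `x̄`. Compact-valued upper semicontinuous images of Menger spaces are Menger, and so
are countable unions of such subspaces.
-/

section Menger

variable {Y Z : Type*} [TopologicalSpace Y] [TopologicalSpace Z]

def IsRelMenger (S : Set Y) : Prop :=
  ∀ U : ℕ → Set (Set Y),
    (∀ n, ∀ u ∈ U n, IsOpen u) → (∀ n, ⋃₀ U n = Set.univ) →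
    ∃ V : ℕ → Set (Set Y), (∀ n, V n ⊆ U n ∧ (V n).Finite) ∧ S ⊆ ⋃ n, ⋃₀ V n

theorem isMenger_of_iUnion_eq_univ {ι : Type*} [Countable ι] (S : ι → Set Y)
    (hS : ⋃ i, S i = univ) (h : ∀ i, IsRelMenger (S i)) : IsMenger Y := by
  intro U hU hcov
  obtain ⟨e, he⟩ := Countable.exists_injective_nat (ι × ℕ)
  choose V hV hVS using fun i => h i (fun j => U (e (i, j))) (fun j => hU _) (fun j => hcov _)
  have hfiber : ∀ n, (e ⁻¹' {n}).Finite := fun n => (subsingleton_singleton.preimage he).finite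
  refine ⟨fun n => ⋃ p ∈ e ⁻¹' {n}, V p.1 p.2, fun n => ⟨?_, ?_⟩, ?_⟩
  · exact iUnion₂_subset fun p (hp : e p = n) => hp ▸ (hV p.1 p.2).1
  · exact (hfiber n).biUnion fun p _ => (hV p.1 p.2).2
  · refine eq_univ_of_univ_subset (hS ▸ iUnion_subset fun i => (hVS i).trans ?_)
    refine iUnion_subset fun j => subset_iUnion_of_subset (e (i, j)) (sUnion_mono ?_)
    exact subset_biUnion_of_mem (u := fun p : ι × ℕ => V p.1 p.2)
      (show (i, j) ∈ e ⁻¹' {e (i, j)} from rfl)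

theorem IsMenger.exists_finite_iUnion_eq_univ (hZ : IsMenger Z) (W : ℕ → Z → Set Z)
    (hW : ∀ n z, IsOpen (W n z)) (hmem : ∀ n z, z ∈ W n z) :
    ∃ F : ℕ → Set Z, (∀ n, (F n).Finite) ∧ ⋃ n, ⋃ z ∈ F n, W n z = univ := by
  obtain ⟨V, hV, hcov⟩ := hZ (fun n => range (W n)) (by rintro n _ ⟨z, rfl⟩; exact hW n z)
    (fun n => eq_univ_of_forall fun z => ⟨W n z, mem_range_self z, hmem n z⟩)
  choose z hz using fun n w (hw : w ∈ V n) => (hV n).1 hw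
  have (n : ℕ) : Finite (V n) := (hV n).2.to_subtype
  refine ⟨fun n => range fun w : V n => z n w w.2, fun n => finite_range _, ?_⟩
  refine eq_univ_of_forall fun y => ?_
  obtain ⟨n, w, hw, hyw⟩ : ∃ n, ∃ w ∈ V n, y ∈ w := by simpa using hcov.symm.subset (mem_univ y)
  exact mem_iUnion.2 ⟨n, mem_biUnion ⟨⟨w, hw⟩, rfl⟩ ((hz n w hw).symm ▸ hyw)⟩

theorem isRelMenger_iUnion_of_upperSemicontinuous (hZ : IsMenger Z) (g : Z → Set Y)
    (hcpt : ∀ z, IsCompact (g z)) (husc : ∀ O, IsOpen O → IsOpen {z | g z ⊆ O}) :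
    IsRelMenger (⋃ z, g z) := by
  intro U hU hcov
  have hfin : ∀ n z, ∃ D ⊆ U n, D.Finite ∧ g z ⊆ ⋃₀ D := fun n z => by
    simpa only [sUnion_eq_biUnion] using (hcpt z).elim_finite_subcover_image (hU n)
      (by simp only [← sUnion_eq_biUnion, hcov n, subset_univ])
  choose D hDU hDfin hgD using hfin
  obtain ⟨F, hFfin, hFcov⟩ := hZ.exists_finite_iUnion_eq_univ (fun n z => {z' | g z' ⊆ ⋃₀ D n z})
    (fun n z => husc _ (isOpen_sUnion fun d hd => hU n d (hDU n z hd))) (fun n z => hgD n z)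
  refine ⟨fun n => ⋃ z ∈ F n, D n z, fun n => ⟨iUnion₂_subset fun z _ => hDU n z,
    (hFfin n).biUnion fun z _ => hDfin n z⟩, iUnion_subset fun z₀ => ?_⟩
  obtain ⟨n, z, hz, hz₀⟩ : ∃ n, ∃ z ∈ F n, g z₀ ⊆ ⋃₀ D n z := by
    simpa using hFcov.symm.subset (mem_univ z₀)
  exact hz₀.trans (subset_iUnion_of_subset n (sUnion_mono (subset_biUnion_of_mem hz)))

end Menger

section Cantor

variable {β : Type*}

attribute [local instance] cantorTop

namespace cantorTop

-- `cantorTop` is induced from the discrete topology `⊥` on `Prop`, not from the Sierpiński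
-- topology that is `Prop`'s global instance.
theorem isClopen_setOf_mem (a : β) : IsClopen {S : Set β | a ∈ S} := by
  let _ : TopologicalSpace Prop := ⊥
  have : DiscreteTopology Prop := ⟨rfl⟩
  exact (isClopen_discrete {p : Prop | p}).preimage
    ((continuous_apply a).comp continuous_induced_dom)

instance : CompactSpace (Set β) := by
  let _ : TopologicalSpace Prop := ⊥
  refine ⟨(IsInducing.induced fun (S : Set β) (a : β) => a ∈ S).isCompact_iff.2 ?_⟩
  rw [image_univ_of_surjective fun f => ⟨{b | f b}, rfl⟩]
  exact isCompact_univ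

theorem isClosed_Ici (U : Set β) : IsClosed (Ici U) := by
  have : Ici U = ⋂ a ∈ U, {S : Set β | a ∈ S} := by ext S; simp [subset_def]
  exact this ▸ isClosed_biInter fun a _ => (isClopen_setOf_mem a).isClosed

theorem exists_finite_subset_Ici_subset {U : Set β} {O : Set (Set β)} (hO : IsOpen O)
    (hUO : Ici U ⊆ O) : ∃ s ⊆ U, s.Finite ∧ Ici s ⊆ O := by
  obtain ⟨t, ht⟩ := hO.isClosed_compl.isCompact.elim_finite_subfamily_closed
    (fun a : U => {S : Set β | a.1 ∈ S}) (fun a => (isClopen_setOf_mem a.1).isClosed)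
    (eq_empty_of_forall_notMem fun S ⟨hSO, hS⟩ => hSO (hUO fun a ha => mem_iInter.1 hS ⟨a, ha⟩))
  refine ⟨(↑) '' (t : Set U), by rintro _ ⟨a, -, rfl⟩; exact a.2, t.finite_toSet.image _, ?_⟩
  intro S hS
  by_contra hSO
  exact ht.subset ⟨hSO, mem_iInter₂.2 fun a ha => hS ⟨a, ha, rfl⟩⟩

theorem isOpen_setOf_Ici_subset {Z : Type*} [TopologicalSpace Z] {B : Z → Set β}
    (hB : ∀ a, IsOpen {z | a ∈ B z}) {O : Set (Set β)} (hO : IsOpen O) :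
    IsOpen {z | Ici (B z) ⊆ O} := by
  refine isOpen_iff_forall_mem_open.2 fun z hz => ?_
  obtain ⟨s, hsB, hs, hsO⟩ := exists_finite_subset_Ici_subset hO hz
  refine ⟨{z' | s ⊆ B z'}, fun z' hz' => (Ici_subset_Ici.2 hz').trans hsO, ?_, hsB⟩
  have : {z' | s ⊆ B z'} = ⋂ a ∈ s, {z | a ∈ B z} := by ext; simp [subset_def]
  exact this ▸ hs.isOpen_biInter fun a _ => hB a

end cantorTop

theorem IsUpperSet.isMengerSet {ι : Type*} [Countable ι] {𝒰 : Set (Set β)} (h𝒰 : IsUpperSet 𝒰)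
    {Z : ι → Type*} [∀ i, TopologicalSpace (Z i)] (hZ : ∀ i, IsMenger (Z i))
    (B : ∀ i, Z i → Set β) (hB𝒰 : ∀ i z, B i z ∈ 𝒰) (hB : ∀ i a, IsOpen {z | a ∈ B i z})
    (hcov : ∀ U ∈ 𝒰, ∃ i z, B i z ⊆ U) : IsMengerSet 𝒰 := by
  have hIci : ∀ i z, Ici (B i z) ⊆ 𝒰 := fun i z => h𝒰.Ici_subset (hB𝒰 i z)
  refine isMenger_of_iUnion_eq_univ (fun i => ⋃ z, ((↑) : 𝒰 → Set β) ⁻¹' Ici (B i z)) ?_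
    fun i => isRelMenger_iUnion_of_upperSemicontinuous (hZ i) _ (fun z => ?_) fun O hO => ?_
  · refine eq_univ_of_forall fun U => ?_
    obtain ⟨i, z, hzU⟩ := hcov U U.2
    exact mem_iUnion₂.2 ⟨i, z, hzU⟩
  · rw [Subtype.isCompact_iff, Subtype.image_preimage_coe, inter_eq_right.2 (hIci i z)]
    exact (cantorTop.isClosed_Ici _).isCompact
  · obtain ⟨O', hO', rfl⟩ := isOpen_induced_iff.1 hO
    have : ∀ z, ((↑) : 𝒰 → Set β) ⁻¹' Ici (B i z) ⊆ (↑) ⁻¹' O' ↔ Ici (B i z) ⊆ O' :=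
      fun z => preimage_subset_preimage_iff (Subtype.range_coe.symm ▸ hIci i z)
    simp_rw [this]
    exact cantorTop.isOpen_setOf_Ici_subset (hB i) hO'

end Cantor

theorem isOpen_setOf_forall_abs_lt (ι : Type*) [Finite ι] (r : ℝ) :
    IsOpen {v : ι → ℝ | ∀ i, |v i| < r} := by
  simp only [ofPred_forall]
  exact isOpen_iInter_of_finite fun i => isOpen_lt (continuous_apply i).abs continuous_const

theorem exists_forall_abs_apply_lt_subset_of_mem_nhds {X : Type*} {U : Set (X → ℝ)}
    (hU : U ∈ 𝓝 0) :
    ∃ (m : ℕ) (xs : Fin m → X) (k : ℕ), {f : X → ℝ | ∀ i, |f (xs i)| < 1 / (k + 1)} ⊆ U := by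
  rw [nhds_pi] at hU
  obtain ⟨⟨F, k⟩, ⟨hF, -⟩, hFU⟩ := Metric.nhds_basis_ball_inv_nat_succ.pi_self.mem_iff.1 hU
  obtain ⟨m, xs, rfl⟩ := hF.fin_embedding
  refine ⟨m, xs, k, fun f hf => hFU ?_⟩
  rintro _ ⟨i, rfl⟩
  show f (xs i) ∈ Metric.ball (0 : ℝ) _
  simpa using hf i

theorem cp_neighborhood_family_menger_general (X : Type*) [TopologicalSpace X]
    (hMenger : ∀ n : ℕ, IsMenger (Fin n → X))
    (A : Set (Cp X)) (h0 : (0 : Cp X) ∈ A) :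
    @IsMengerSet (Set ↥A) (cantorTop ↥A)
      {U : Set ↥A | (⟨0, h0⟩ : ↥A) ∈ interior U} := by
  let _ := cantorTop ↥A
  let B (p : ℕ × ℕ) (xs : Fin p.1 → X) : Set A := {a | ∀ i, |a.1.1 (xs i)| < 1 / (p.2 + 1)}
  have hev : IsInducing fun a : A => a.1.1 := IsInducing.subtypeVal.comp IsInducing.subtypeVal
  refine IsUpperSet.isMengerSet (ι := ℕ × ℕ) (Z := fun p => Fin p.1 → X)
    (fun U V hUV hU => interior_mono hUV hU) (fun p => hMenger p.1) B
    (fun p xs => ?_) (fun p a => ?_) fun U hU => ?_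
  · have hB : IsOpen (B p xs) := (isOpen_setOf_forall_abs_lt _ _).preimage
      (continuous_pi fun i => (continuous_apply (xs i)).comp hev.continuous)
    rw [mem_ofPred_eq, hB.interior_eq]
    intro i
    show |(0 : ℝ)| < 1 / ((p.2 : ℝ) + 1)
    rw [abs_zero]
    positivity
  · exact (isOpen_setOf_forall_abs_lt _ _).preimage
      (continuous_pi fun i => a.1.2.comp (continuous_apply i))
  · rw [mem_ofPred_eq, mem_interior_iff_mem_nhds, hev.nhds_eq_comap] at hU
    obtain ⟨t, ht, htU⟩ := mem_comap.1 hU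
    obtain ⟨m, xs, k, hsub⟩ := exists_forall_abs_apply_lt_subset_of_mem_nhds ht
    exact ⟨(m, k), xs, (preimage_mono hsub).trans htU⟩

/-- if `X` is Tychonoff with all finite powers Menger, `A ⊆ C_p(X)` is countable,
contains `0`, and `0` is a limit point of `A`, then the family of subsets of `A` whose
interior (in the subspace topology of `A`) contains `0` is Menger as a subspace of `𝒫(A)`. -/
theorem cp_neighborhood_family_menger (X : Type*) [TopologicalSpace X] [T35Space X]
    (hMenger : ∀ n : ℕ, IsMenger (Fin n → X))
    (A : Set (Cp X)) (hA : A.Countable) (h0 : (0 : Cp X) ∈ A)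
    (hlim : (0 : Cp X) ∈ closure (A \ {0})) :
    @IsMengerSet (Set ↥A) (cantorTop ↥A)
      {U : Set ↥A | (⟨0, h0⟩ : ↥A) ∈ interior U} :=
  cp_neighborhood_family_menger_general X hMenger A h0
end

section
/- Let X be a Tychonoff space and A a countable subset of C_p(X) containing the zero function 0. For n ∈ ω, m ≥ 1, and x⃗ = ⟨x_0,…,x_{n−1}⟩ ∈ X^n let U_{n,m,x⃗} = {a ∈ A : |a(x_i)| < 1/m for all i < n}, and for B ⊆ A let ↑B = {B' ⊆ A : B ⊆ B'} ⊆ 𝒫(A). Then for all n ∈ ω and m ≥ 1, the map from X^n to subsets of 𝒫(A) sending x⃗ to ↑U_{n,m,x⃗} is compact-valued upper semicontinuous. -/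
open Set Topology Filter

/-- A map `Φ : T → 𝒫(S)` is compact-valued upper semicontinuous. -/
def CompactValuedUSC {T S : Type*} [TopologicalSpace T] [TopologicalSpace S]
    (Φ : T → Set S) : Prop :=
  (∀ t, IsCompact (Φ t)) ∧
  ∀ (t : T) (W : Set S), IsOpen W → Φ t ⊆ W →
    ∃ O : Set T, IsOpen O ∧ t ∈ O ∧ ∀ t' ∈ O, Φ t' ⊆ W

/-- the map `x⃗ ↦ ↑U_{n,m,x⃗}` from `X^n` to `𝒫(𝒫(A))` is compact-valued
upper semicontinuous, where `U_{n,m,x⃗} = {a ∈ A : |a(xᵢ)| < 1/m for all i < n}` and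
`↑B = {B' ⊆ A : B ⊆ B'}`, with `𝒫(A)` carrying the Cantor-space topology. -/
theorem up_closure_usc (X : Type*) [TopologicalSpace X] [T35Space X]
    (A : Set (Cp X)) (hA : A.Countable) (h0 : (0 : Cp X) ∈ A)
    (n m : ℕ) (hm : 1 ≤ m) :
    @CompactValuedUSC (Fin n → X) (Set ↥A) _ (cantorTop ↥A)
      (fun x : Fin n → X =>
        {B' : Set ↥A | {a : ↥A | ∀ i : Fin n, |a.1.1 (x i)| < 1 / (m : ℝ)} ⊆ B'}) := by
  classical
  letI : TopologicalSpace Prop := ⊥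
  haveI : DiscreteTopology Prop := ⟨rfl⟩
  have key : cantorTop ↥A = @Pi.topologicalSpace ↥A (fun _ => Prop) (fun _ => ⊥) :=
    @induced_id (Set ↥A) (@Pi.topologicalSpace ↥A (fun _ => Prop) (fun _ => ⊥))
  rw [key]
  letI : TopologicalSpace (Set ↥A) := @Pi.topologicalSpace ↥A (fun _ => Prop) (fun _ => ⊥)
  haveI : CompactSpace Prop := Finite.compactSpace
  haveI : CompactSpace (Set ↥A) :=
    (@Pi.compactSpace ↥A (fun _ => Prop) (fun _ => ⊥) (fun _ => inferInstance))
  set U : (Fin n → X) → Set ↥A :=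
    fun x => {a : ↥A | ∀ i : Fin n, |a.1.1 (x i)| < 1 / (m : ℝ)} with hU
  have hZ : ∀ a : ↥A, IsClosed {B' : Set ↥A | a ∈ B'} := by
    intro a
    have heq : {B' : Set ↥A | a ∈ B'} = (fun B' : Set ↥A => B' a) ⁻¹' {p : Prop | p} := rfl
    rw [heq]
    exact IsClosed.preimage (continuous_apply a) (isClosed_discrete {p : Prop | p})
  have hΦclosed : ∀ x, IsClosed {B' : Set ↥A | U x ⊆ B'} := by
    intro x
    have : {B' : Set ↥A | U x ⊆ B'} = ⋂ a ∈ U x, {B' : Set ↥A | a ∈ B'} := by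
      ext B'; simp [Set.subset_def]
    rw [this]
    exact isClosed_biInter fun a _ => hZ a
  constructor
  · intro x
    exact (hΦclosed x).isCompact
  · intro x W hW hsub
    -- find a finite subfamily via compactness of Wᶜ
    have hWc : IsCompact (Wᶜ) := hW.isClosed_compl.isCompact
    have hempty : Wᶜ ∩ ⋂ a : ↥(U x), {B' : Set ↥A | (a : ↥A) ∈ B'} = ∅ := by
      ext B'
      simp only [Set.mem_inter_iff, Set.mem_iInter, Set.mem_compl_iff, Set.mem_empty_iff_false,
        iff_false, not_and]
      intro hBW h
      exact hBW (hsub (fun a ha => h ⟨a, ha⟩))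
    obtain ⟨t, ht⟩ := hWc.elim_finite_subfamily_closed _ (fun a : ↥(U x) => hZ a) hempty
    refine ⟨⋂ a ∈ t, ⋂ i : Fin n, {x' : Fin n → X | |(a : ↥A).1.1 (x' i)| < 1 / (m : ℝ)},
      ?_, ?_, ?_⟩
    · refine isOpen_biInter_finset fun a _ => isOpen_iInter_of_finite fun i => ?_
      have hc : Continuous fun x' : Fin n → X => |(a : ↥A).1.1 (x' i)| :=
        ((a : ↥A).1.2.comp (continuous_apply i)).abs
      exact isOpen_lt hc continuous_const
    · simp only [Set.mem_iInter, Set.mem_setOf_eq]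
      intro a _ i
      exact a.2 i
    · intro x' hx' B' hB'
      by_contra hBW
      have hBmem : B' ∈ Wᶜ ∩ ⋂ a ∈ t, {B'' : Set ↥A | (a : ↥A) ∈ B''} := by
        refine ⟨hBW, ?_⟩
        simp only [Set.mem_iInter, Set.mem_setOf_eq]
        intro a ha
        apply hB'
        intro i
        simp only [Set.mem_iInter, Set.mem_setOf_eq] at hx'
        exact hx' a ha i
      rw [ht] at hBmem
      exact hBmem
end

section
/- Let τ be a topology on ω, let x ∈ ω, and let 𝒰 = {U ⊆ ω : x ∈ Int_τ(U)}, viewed as a subspace of 𝒫(ω). For each n ∈ ω let A_n = {a^n_k : k ∈ ω} be a subset of ω with x ∈ cl_τ(A_n), with a fixed enumeration. For U ∈ 𝒰 define φ(U)(n) = min{k ∈ ω : a^n_k ∈ U} and Φ(U) = {z ∈ ω^ω : z(n) ≤ φ(U)(n) for all n ∈ ω}. Then Φ is a compact-valued upper semicontinuous map from the subspace 𝒰 of 𝒫(ω) to the Baire space ω^ω. -/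
open Set Topology Filter

/-- The subspace topology that a family of subsets of `α` inherits from the Cantor-space
topology on `𝒫(α)`. -/
def subCantor {α : Type*} (F : Set (Set α)) : TopologicalSpace ↥F :=
  TopologicalSpace.induced Subtype.val (cantorTop α)

/-- for a topology `τ` on `ω`, a point `x`, sets `Aₙ = {aⁿₖ : k ∈ ω}` with
`x ∈ cl(Aₙ)`, the map `Φ(U) = {z ∈ ω^ω : z(n) ≤ φ(U)(n) for all n}`, where
`φ(U)(n) = min{k : aⁿₖ ∈ U}`, is compact-valued upper semicontinuous from the subspace
`𝒰 = {U ⊆ ω : x ∈ Int U}` of `𝒫(ω)` to the Baire space `ω^ω`. -/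
theorem phi_usc (τ : TopologicalSpace ℕ) (x : ℕ) (a : ℕ → ℕ → ℕ)
    (ha : ∀ n, x ∈ @closure _ τ (Set.range (a n))) :
    @CompactValuedUSC (↥{U : Set ℕ | x ∈ @interior _ τ U}) (ℕ → ℕ)
      (subCantor {U : Set ℕ | x ∈ @interior _ τ U}) _
      (fun U => {z : ℕ → ℕ | ∀ n, z n ≤ sInf {k | a n k ∈ U.1}}) := by
  classical
  constructor
  · intro U
    show IsCompact {z : ℕ → ℕ | ∀ n, z n ≤ sInf {k | a n k ∈ U.1}}
    have h : {z : ℕ → ℕ | ∀ n, z n ≤ sInf {k | a n k ∈ U.1}}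
        = Set.univ.pi (fun n => Set.Iic (sInf {k | a n k ∈ U.1})) := by
      ext z
      exact ⟨fun h n _ => h n, fun h n => h n (Set.mem_univ n)⟩
    rw [h]
    exact isCompact_univ_pi fun n => (Set.finite_Iic _).isCompact
  · intro U W hW hsub
    set φ : ℕ → ℕ := fun n => sInf {k | a n k ∈ U.1} with hφ
    have hmem : ∀ n, a n (φ n) ∈ U.1 := by
      intro n
      have hU : x ∈ @interior _ τ U.1 := U.2
      obtain ⟨y, hy1, k, rfl⟩ := mem_closure_iff.1 (ha n) _ isOpen_interior hU
      have hk : a n k ∈ U.1 := interior_subset hy1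
      have h2 : Set.Nonempty {k | a n k ∈ U.1} := ⟨k, hk⟩
      exact Nat.sInf_mem h2
    set B : Set (ℕ → ℕ) := Set.univ.pi (fun n => Set.Iic (φ n)) with hBdef
    have hBW : B ⊆ W := by
      intro z hz
      exact hsub fun n => hz n (Set.mem_univ n)
    have hBcomp : IsCompact B := isCompact_univ_pi fun n => (Set.finite_Iic _).isCompact
    have key : ∀ z ∈ B, ∃ I : Set ℕ, I.Finite ∧ ∃ o : ℕ → Set ℕ,
        (∀ i, IsOpen (o i)) ∧ (∀ i ∈ I, z i ∈ o i) ∧ Set.pi I o ⊆ W := by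
      intro z hz
      have hWz : W ∈ 𝓝 z := hW.mem_nhds (hBW hz)
      rw [nhds_pi] at hWz
      obtain ⟨I, hIfin, t, ht, hts⟩ := Filter.mem_pi.1 hWz
      exact ⟨I, hIfin, fun i => interior (t i), fun i => isOpen_interior,
        fun i _ => mem_interior_iff_mem_nhds.2 (ht i),
        fun y hy => hts fun i hi => interior_subset (hy i hi)⟩
    choose! I hIfin o ho hzo hosub using key
    have hboxopen : ∀ z : ↥B, IsOpen (Set.pi (I z.1) (o z.1)) := by
      intro z
      exact isOpen_set_pi (hIfin z.1 z.2) (fun i _ => ho z.1 z.2 i)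
    have hcover : B ⊆ ⋃ z : ↥B, Set.pi (I z.1) (o z.1) := by
      intro z hz
      exact Set.mem_iUnion.2 ⟨⟨z, hz⟩, fun i hi => hzo z hz i hi⟩
    obtain ⟨t, ht⟩ := hBcomp.elim_finite_subcover _ hboxopen hcover
    set F : Set ℕ := ⋃ z ∈ t, I z.1 with hFdef
    have hFfin : F.Finite := Set.Finite.biUnion t.finite_toSet (fun z _ => hIfin z.1 z.2)
    set c : ℕ → ℕ := fun n => a n (φ n) with hc
    refine ⟨Subtype.val ⁻¹' {S : Set ℕ | ∀ n ∈ F, c n ∈ S}, ?_, ?_, ?_⟩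
    · -- openness in the subspace of the Cantor topology
      letI : TopologicalSpace Prop := ⊥
      haveI : DiscreteTopology Prop := ⟨rfl⟩
      unfold subCantor cantorTop
      rw [induced_compose]
      have hP : @IsOpen (ℕ → Prop) (@Pi.topologicalSpace ℕ (fun _ => Prop) (fun _ => ⊥))
          {g : ℕ → Prop | ∀ n ∈ F, g (c n)} := by
        have h : {g : ℕ → Prop | ∀ n ∈ F, g (c n)}
            = ⋂ n ∈ F, (fun g : ℕ → Prop => g (c n)) ⁻¹' {p : Prop | p} := by
          ext g; simp
        rw [h]
        exact hFfin.isOpen_biInter fun n _ =>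
          (continuous_apply (c n)).isOpen_preimage _ (isOpen_discrete _)
      exact isOpen_induced_iff.mpr ⟨_, hP, rfl⟩
    · exact fun n _ => hmem n
    · intro U' hU' z hz
      have hzF : ∀ n ∈ F, z n ≤ φ n := by
        intro n hn
        exact le_trans (hz n) (Nat.sInf_le (hU' n hn))
      set z' : ℕ → ℕ := fun n => if n ∈ F then z n else 0 with hz'def
      have hz'B : z' ∈ B := by
        intro n _
        show (if n ∈ F then z n else 0) ≤ φ n
        split
        · exact hzF n (by assumption)
        · exact Nat.zero_le _
      obtain ⟨w, hw⟩ := Set.mem_iUnion.1 (ht hz'B)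
      obtain ⟨hwt, hw2⟩ := Set.mem_iUnion.1 hw
      refine hosub w.1 w.2 ?_
      intro i hi
      have hiF : i ∈ F := Set.mem_biUnion hwt hi
      have h3 : z' i ∈ o w.1 i := hw2 i hi
      rw [hz'def] at h3
      simpa [hiF] using h3
end

section
/- Let τ be a topology on ω, let x ∈ ω, and let 𝒰 = {U ⊆ ω : x ∈ Int_τ(U)}, viewed as a subspace of 𝒫(ω). For each n ∈ ω let A_n = {a^n_k : k ∈ ω} be a subset of ω with x ∈ cl_τ(A_n), with a fixed enumeration, and for U ∈ 𝒰 define φ(U)(n) = min{k ∈ ω : a^n_k ∈ U}. If 𝒰 is Menger as a subspace of 𝒫(ω), then Z = {z ∈ ω^ω : there exists U ∈ 𝒰 with z(n) ≤ φ(U)(n) for all n} is a Menger subspace of the Baire space ω^ω. -/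
open Set Topology Filter

/-!
Write `φ(U) = (sInf (a n ⁻¹' U))ₙ`. On `𝒰` every `a n ⁻¹' U` is nonempty because `x ∈ cl(Aₙ)`,
and `φ(U)(n) = m` is decided by the finitely many coordinates `a n 0, …, a n m` of `U`, so `φ` is
continuous on `𝒰`. The map `(U, t) ↦ (min (tₙ) (φ(U)(n)))ₙ` from `𝒰 × (ℕ∞)^ℕ` to `ω^ω` is then
continuous with image exactly `Z`. Since `(ℕ∞)^ℕ` is compact, `𝒰 × (ℕ∞)^ℕ` is Menger, and so is
its continuous image `Z`.
-/

section Menger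

variable {X Y K : Type*} [TopologicalSpace X] [TopologicalSpace Y] [TopologicalSpace K]

theorem IsMenger.of_surjective (hX : IsMenger X) {f : X → Y} (hf : Continuous f)
    (hs : Function.Surjective f) : IsMenger Y := by
  intro U hUo hUc
  obtain ⟨V, hVU, hVc⟩ := hX (fun n => (f ⁻¹' ·) '' U n)
    (by rintro n _ ⟨u, hu, rfl⟩; exact (hUo n u hu).preimage hf)
    (fun n => by rw [sUnion_image, ← preimage_iUnion₂, ← sUnion_eq_biUnion, hUc n, preimage_univ])
  refine ⟨fun n => {u ∈ U n | f ⁻¹' u ∈ V n}, fun n => ⟨sep_subset _ _, ?_⟩, ?_⟩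
  · exact ((hVU n).2.preimage hs.preimage_injective.injOn).subset fun u hu => hu.2
  · refine eq_univ_of_forall fun y => ?_
    obtain ⟨x, rfl⟩ := hs y
    obtain ⟨_, ⟨n, rfl⟩, v, hv, hxv⟩ := hVc.symm ▸ mem_univ x
    obtain ⟨u, hu, rfl⟩ := (hVU n).1 hv
    exact mem_iUnion.2 ⟨n, u, ⟨hu, hv⟩, hxv⟩

theorem exists_isOpen_prod_univ_subset_sUnion [CompactSpace K] {𝒲 : Set (Set (X × K))}
    (h𝒲o : ∀ w ∈ 𝒲, IsOpen w) (h𝒲c : ⋃₀ 𝒲 = univ) (x : X) :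
    ∃ O, IsOpen O ∧ x ∈ O ∧ ∃ 𝒱 ⊆ 𝒲, 𝒱.Finite ∧ O ×ˢ (univ : Set K) ⊆ ⋃₀ 𝒱 := by
  obtain ⟨𝒱, h𝒱𝒲, h𝒱f, hx𝒱⟩ := (isCompact_singleton.prod isCompact_univ).elim_finite_subcover_image
    (b := 𝒲) (c := id) h𝒲o (by simp [← sUnion_eq_biUnion, h𝒲c])
  obtain ⟨O, V, hO, -, hxO, hV, hOV⟩ := generalized_tube_lemma isCompact_singleton isCompact_univ
    (isOpen_biUnion fun v hv => h𝒲o v (h𝒱𝒲 hv)) hx𝒱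
  refine ⟨O, hO, hxO rfl, 𝒱, h𝒱𝒲, h𝒱f, ?_⟩
  rw [sUnion_eq_biUnion]
  exact (prod_mono subset_rfl hV).trans hOV

theorem IsMenger.prod_compactSpace [CompactSpace K] (hX : IsMenger X) : IsMenger (X × K) := by
  intro U hUo hUc
  obtain ⟨W, hWU, hWc⟩ := hX
    (fun n => {O | IsOpen O ∧ ∃ 𝒱 ⊆ U n, 𝒱.Finite ∧ O ×ˢ (univ : Set K) ⊆ ⋃₀ 𝒱})
    (fun n O hO => hO.1)
    (fun n => eq_univ_of_forall fun x => by
      obtain ⟨O, hO, hxO, h𝒱⟩ := exists_isOpen_prod_univ_subset_sUnion (hUo n) (hUc n) x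
      exact ⟨O, ⟨hO, h𝒱⟩, hxO⟩)
  choose 𝒱 h𝒱U h𝒱f h𝒱c using fun n w (hw : w ∈ W n) => ((hWU n).1 hw).2
  refine ⟨fun n => ⋃ w, ⋃ hw : w ∈ W n, 𝒱 n w hw, fun n => ⟨?_, ?_⟩, ?_⟩
  · exact iUnion₂_subset fun w hw => h𝒱U n w hw
  · exact (hWU n).2.biUnion' fun w hw => h𝒱f n w hw
  · refine eq_univ_of_forall fun p => ?_
    obtain ⟨_, ⟨n, rfl⟩, w, hw, hpw⟩ := hWc.symm ▸ mem_univ p.1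
    obtain ⟨v, hv, hpv⟩ := h𝒱c n w hw ⟨hpw, mem_univ p.2⟩
    exact mem_iUnion.2 ⟨n, v, mem_iUnion₂.2 ⟨w, hw, hv⟩, hpv⟩

end Menger

theorem IsMengerSet.mono_topology {X : Type*} {t₁ t₂ : TopologicalSpace X} (h : t₁ ≤ t₂) {S : Set X}
    (hS : @IsMengerSet X t₁ S) : @IsMengerSet X t₂ S :=
  @IsMenger.of_surjective _ _ (_) (_) hS id (continuous_id_of_le (induced_mono h))
    Function.surjective_id

theorem continuous_toNat_min_natCast : Continuous fun q : ℕ × ℕ∞ => (min q.2 q.1).toNat := by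
  refine continuous_prod_of_discrete_left.2 fun k => ENat.isEmbedding_natCast.continuous_iff.2 ?_
  have hfin : ∀ s : ℕ∞, ((min s k).toNat : ℕ∞) = min s k := fun s =>
    ENat.natCast_toNat (ne_top_of_le_ne_top (ENat.natCast_ne_top k) (min_le_right _ _))
  rw [show ((↑) ∘ fun s : ℕ∞ => (min s k).toNat) = fun s => min s (k : ℕ∞) from funext hfin]
  exact continuous_id.min continuous_const

theorem IsMenger.isMengerSet_setOf_le {X ι : Type*} [TopologicalSpace X] (hX : IsMenger X)
    {φ : X → ι → ℕ} (hφ : Continuous φ) : IsMengerSet {z : ι → ℕ | ∃ x, z ≤ φ x} := by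
  set g : X × (ι → ℕ∞) → ι → ℕ := fun p i => (min (p.2 i) (φ p.1 i)).toNat
  have hg : Continuous g := continuous_pi fun i => continuous_toNat_min_natCast.comp
    (((continuous_apply i).comp (hφ.comp continuous_fst)).prodMk
      ((continuous_apply i).comp continuous_snd))
  have hgZ : ∀ p, g p ∈ {z : ι → ℕ | ∃ x, z ≤ φ x} :=
    fun p => ⟨p.1, fun i => ENat.toNat_le_of_le_natCast (min_le_right _ _)⟩
  refine (hX.prod_compactSpace (K := ι → ℕ∞)).of_surjective (hg.subtype_mk hgZ) ?_
  rintro ⟨z, x, hz⟩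
  refine ⟨(x, fun i => z i), Subtype.ext (funext fun i => ?_)⟩
  show (min (z i : ℕ∞) (φ x i)).toNat = z i
  rw [min_eq_left (ENat.natCast_le_natCast.2 (hz i)), ENat.toNat_natCast]

section Cantor

attribute [local instance] cantorTop

variable {α : Type*}

theorem cantorTop_isOpen_setOf (c : α) (p : Prop → Prop) : IsOpen {S : Set α | p (c ∈ S)} :=
  letI : TopologicalSpace Prop := ⊥
  haveI := discreteTopology_bot Prop
  isOpen_induced ((isOpen_discrete {q | p q}).preimage (continuous_apply c))

theorem cantorTop_continuousOn_sInf_preimage (e : ℕ → α) :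
    ContinuousOn (fun S : Set α => sInf (e ⁻¹' S)) {S | (e ⁻¹' S).Nonempty} := by
  intro S hS
  set m := sInf (e ⁻¹' S)
  refine ContinuousAt.continuousWithinAt ?_
  rw [ContinuousAt, nhds_discrete ℕ, tendsto_pure]
  have hN : IsOpen ({T : Set α | e m ∈ T} ∩ ⋂ j ∈ Finset.range m, {T | e j ∉ T}) :=
    (cantorTop_isOpen_setOf _ id).inter
      (isOpen_biInter_finset fun j _ => cantorTop_isOpen_setOf _ Not)
  have hSN : S ∈ {T : Set α | e m ∈ T} ∩ ⋂ j ∈ Finset.range m, {T | e j ∉ T} := by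
    simpa using ⟨Nat.sInf_mem hS, fun j hj => Nat.notMem_of_lt_sInf hj⟩
  filter_upwards [hN.mem_nhds hSN] with T hT
  simp only [mem_inter_iff, mem_ofPred_eq, mem_iInter, Finset.mem_range] at hT
  exact IsLeast.csInf_eq ⟨hT.1, fun j hj => not_lt.1 fun hjm => hT.2 j hjm hj⟩

theorem isMengerSet_setOf_le_sInf {ι : Type*} {𝒰 : Set (Set α)} (h𝒰 : IsMengerSet 𝒰)
    (a : ι → ℕ → α) (hne : ∀ U ∈ 𝒰, ∀ n, (a n ⁻¹' U).Nonempty) :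
    IsMengerSet {z : ι → ℕ | ∃ U ∈ 𝒰, ∀ n, z n ≤ sInf {k | a n k ∈ U}} := by
  have hφ : Continuous fun (U : 𝒰) n => sInf {k | a n k ∈ (U : Set α)} :=
    continuous_pi fun n => (cantorTop_continuousOn_sInf_preimage (a n)).comp_continuous
      continuous_subtype_val fun U => hne U.1 U.2 n
  simpa only [Pi.le_def, Subtype.exists, exists_prop] using h𝒰.isMengerSet_setOf_le hφ

end Cantor

theorem Pi.topologicalSpace_mono {ι : Type*} {Y : ι → Type*} {t₁ t₂ : ∀ i, TopologicalSpace (Y i)}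
    (h : ∀ i, t₁ i ≤ t₂ i) : @Pi.topologicalSpace ι Y t₁ ≤ @Pi.topologicalSpace ι Y t₂ :=
  iInf_mono fun i => induced_mono (h i)

/-- with `τ`, `x`, `Aₙ = {aⁿₖ : k}` and `φ(U)(n) = min{k : aⁿₖ ∈ U}` as before,
if `𝒰 = {U ⊆ ω : x ∈ Int U}` is Menger as a subspace of `𝒫(ω)`, then
`Z = {z ∈ ω^ω : ∃ U ∈ 𝒰 ∀ n, z(n) ≤ φ(U)(n)}` is a Menger subspace of the Baire space. -/
theorem dominated_set_menger (τ : TopologicalSpace ℕ) (x : ℕ) (a : ℕ → ℕ → ℕ)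
    (ha : ∀ n, x ∈ @closure _ τ (Set.range (a n)))
    (hU : @IsMengerSet (Set ℕ) (cantorTop ℕ) {U : Set ℕ | x ∈ @interior _ τ U}) :
    IsMengerSet {z : ℕ → ℕ |
      ∃ U : Set ℕ, x ∈ @interior _ τ U ∧ ∀ n, z n ≤ sInf {k | a n k ∈ U}} := by
  have hne : ∀ U ∈ {U : Set ℕ | x ∈ interior U}, ∀ n, (a n ⁻¹' U).Nonempty := fun U hU n => by
    obtain ⟨_, hkU, k, rfl⟩ := mem_closure_iff.1 (ha n) _ isOpen_interior hU
    exact ⟨k, show a n k ∈ U from interior_subset hkU⟩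
  -- `τ` is a local instance here, so `ℕ → ℕ` carries the product of copies of `τ`, which is
  -- coarser than the Baire topology.
  exact (isMengerSet_setOf_le_sInf hU a hne).mono_topology
    (Pi.topologicalSpace_mono fun _ => bot_le)
end

section
/- Let κ be an infinite cardinal and assume that every Menger subspace Z of the Baire space ω^ω admits a set Y ⊆ ω^ω with |Y| ≤ κ such that for every z ∈ Z there is y ∈ Y with z(n) ≤ y(n) for all n ∈ ω. Let τ be a topology on ω and x ∈ ω be such that 𝒰 = {U ⊆ ω : x ∈ Int_τ(U)} is Menger as a subspace of 𝒫(ω). Then for every sequence ⟨A_n : n ∈ ω⟩ of subsets of ω with x ∈ cl_τ(A_n) for all n, there exists a family of at most κ many sequences ⟨K^α_n : n ∈ ω⟩ (α < κ) of finite sets K^α_n ⊆ A_n such that for every U ∈ τ with x ∈ U there exists α with U ∩ K^α_n ≠ ∅ for all n ∈ ω; that is, ζ(⟨ω,τ⟩, x) ≤ κ. -/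
open Set Topology Filter

theorem isMenger_of_image {X Y : Type*} [TopologicalSpace X] [TopologicalSpace Y]
    {f : X → Y} (hf : Continuous f) (hsurj : Function.Surjective f)
    (hX : IsMenger X) : IsMenger Y := by
  classical
  intro U hUopen hUcov
  obtain ⟨V, hV, hVcov⟩ := hX (fun n => (f ⁻¹' ·) '' U n)
    (by rintro n _ ⟨u, hu, rfl⟩; exact (hUopen n u hu).preimage hf)
    (by
      intro n
      ext p
      simp only [mem_sUnion, mem_univ, iff_true]
      have : f p ∈ ⋃₀ U n := by rw [hUcov n]; trivial
      obtain ⟨u, hu, hp⟩ := this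
      exact ⟨f ⁻¹' u, ⟨u, hu, rfl⟩, hp⟩)
  set c : ℕ → Set X → Set Y := fun n v =>
    if h : v ∈ (f ⁻¹' ·) '' U n then h.choose else ∅ with hc
  refine ⟨fun n => c n '' V n, fun n => ⟨?_, (hV n).2.image _⟩, ?_⟩
  · rintro _ ⟨v, hv, rfl⟩
    have hm := (hV n).1 hv
    simp only [hc, dif_pos hm]
    exact hm.choose_spec.1
  · ext y
    simp only [mem_iUnion, mem_sUnion, mem_univ, iff_true]
    obtain ⟨p, rfl⟩ := hsurj y
    have : p ∈ ⋃ n, ⋃₀ V n := by rw [hVcov]; trivial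
    obtain ⟨_, ⟨n, rfl⟩, v, hv, hp⟩ := this
    have hm := (hV n).1 hv
    refine ⟨n, c n v, ⟨v, hv, rfl⟩, ?_⟩
    simp only [hc, dif_pos hm]
    have hsp := hm.choose_spec.2
    rw [← hsp] at hp
    exact hp

theorem cantor_eval_continuous {α : Type*} (a : α) :
    @Continuous (Set α) Prop (cantorTop α) ⊥ (fun S => a ∈ S) := by
  have h1 : @Continuous (Set α) (α → Prop) (cantorTop α)
      (@Pi.topologicalSpace α (fun _ => Prop) (fun _ => ⊥)) (fun S a => a ∈ S) :=
    continuous_induced_dom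
  have h2 : @Continuous (α → Prop) Prop
      (@Pi.topologicalSpace α (fun _ => Prop) (fun _ => ⊥)) ⊥ (fun f => f a) :=
    @continuous_apply α (fun _ => Prop) (fun _ => ⊥) a
  exact @Continuous.comp (Set α) (α → Prop) Prop (cantorTop α)
    (@Pi.topologicalSpace α (fun _ => Prop) (fun _ => ⊥)) ⊥ _ _ h2 h1

theorem cantor_eval_isOpen {α : Type*} (a : α) (P : Set Prop) :
    @IsOpen (Set α) (cantorTop α) ((fun S => a ∈ S) ⁻¹' P) :=
  @Continuous.isOpen_preimage (Set α) Prop (cantorTop α) ⊥ _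
    (cantor_eval_continuous a) P
    (@isOpen_discrete Prop ⊥ (discreteTopology_bot Prop) P)

/-- assume every Menger subspace of Baire space is dominated pointwise by a set
of at most `κ` functions. If `𝒰 = {U ⊆ ω : x ∈ Int U}` is Menger as a subspace of `𝒫(ω)`,
then `ζ(⟨ω,τ⟩,x) ≤ κ`: for every sequence `⟨Aₙ⟩` of sets containing `x` in their closure
there are at most `κ` many sequences of finite sets `Kᵅₙ ⊆ Aₙ` such that every open `U ∋ x`
meets every member of one of these sequences. -/
theorem zeta_le_of_menger (κ : Cardinal.{0}) (hκ : Cardinal.aleph0 ≤ κ)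
    (hdom : ∀ Z : Set (ℕ → ℕ), IsMengerSet Z →
      ∃ Y : Set (ℕ → ℕ), Cardinal.mk Y ≤ κ ∧ ∀ z ∈ Z, ∃ y ∈ Y, ∀ n, z n ≤ y n)
    (τ : TopologicalSpace ℕ) (x : ℕ)
    (hU : @IsMengerSet (Set ℕ) (cantorTop ℕ) {U : Set ℕ | x ∈ @interior _ τ U})
    (A : ℕ → Set ℕ) (hA : ∀ n, x ∈ @closure _ τ (A n)) :
    ∃ (ι : Type) (_ : Cardinal.mk ι ≤ κ) (K : ι → ℕ → Set ℕ),
      (∀ α n, K α n ⊆ A n ∧ (K α n).Finite) ∧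
      ∀ U : Set ℕ, @IsOpen _ τ U → x ∈ U → ∃ α, ∀ n, (U ∩ K α n).Nonempty := by
  classical
  letI : TopologicalSpace (Set ℕ) := cantorTop ℕ
  letI : TopologicalSpace ℕ := instTopologicalSpaceNat
  haveI : DiscreteTopology ℕ := ⟨rfl⟩
  set 𝒰 : Set (Set ℕ) := {U : Set ℕ | x ∈ @interior _ τ U} with h𝒰
  set g : Set ℕ → ℕ → ℕ := fun U n => sInf (A n ∩ U) with hg
  have hne : ∀ U ∈ 𝒰, ∀ n, (A n ∩ U).Nonempty := by
    letI := τ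
    intro U hUmem n
    have hx : x ∈ interior U := hUmem
    obtain ⟨a, ha1, ha2⟩ := mem_closure_iff.mp (hA n) (interior U) isOpen_interior hx
    exact ⟨a, ha2, interior_subset ha1⟩
  -- continuity of g on 𝒰
  have hgcont : Continuous (fun U : ↥𝒰 => g U.1) := by
    refine continuous_pi fun n => ?_
    rw [continuous_discrete_rng]
    intro k
    rw [isOpen_iff_forall_mem_open]
    rintro ⟨U, hUm⟩ hUk
    simp only [mem_preimage, mem_singleton_iff, hg] at hUk
    set W : Set (Set ℕ) := ⋂ j ∈ Finset.range (k + 1),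
      (fun S : Set ℕ => (j ∈ S : Prop)) ⁻¹' {p : Prop | p = (j ∈ U)} with hW
    have hWopen : IsOpen W := by
      refine isOpen_biInter_finset fun j _ => ?_
      exact cantor_eval_isOpen j {p : Prop | p = (j ∈ U)}
    refine ⟨Subtype.val ⁻¹' W, ?_, hWopen.preimage continuous_subtype_val, ?_⟩
    · rintro ⟨V, hVm⟩ hVW
      simp only [mem_preimage, hW, mem_iInter, Finset.mem_range, mem_setOf_eq] at hVW
      simp only [mem_preimage, mem_singleton_iff, hg]
      have hagree : ∀ j ≤ k, (j ∈ V) ↔ (j ∈ U) := fun j hj =>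
        iff_of_eq (hVW j (Nat.lt_succ_of_le hj))
      have hkU : k ∈ A n ∩ U := hUk ▸ Nat.sInf_mem (hne U hUm n)
      have hkV : k ∈ A n ∩ V := ⟨hkU.1, (hagree k le_rfl).mpr hkU.2⟩
      have h1 : sInf (A n ∩ V) ≤ k := Nat.sInf_le hkV
      have h2 : k ≤ sInf (A n ∩ V) := by
        by_contra h
        push_neg at h
        have hmemV := Nat.sInf_mem (hne V hVm n)
        have h3 : sInf (A n ∩ V) ∈ A n ∩ U := ⟨hmemV.1, (hagree _ h.le).mp hmemV.2⟩
        have h4 := Nat.sInf_le h3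
        omega
      exact le_antisymm h1 h2
    · exact mem_iInter₂.2 fun j _ => rfl
  -- the image is Menger
  set Z : Set (ℕ → ℕ) := g '' 𝒰 with hZ
  have hZM : IsMengerSet Z := by
    refine isMenger_of_image (f := fun U : ↥𝒰 => (⟨g U.1, mem_image_of_mem g U.2⟩ : ↥Z))
      (hgcont.subtype_mk _) ?_ hU
    rintro ⟨z, U, hUm, rfl⟩
    exact ⟨⟨U, hUm⟩, rfl⟩
  obtain ⟨Y, hYcard, hYdom⟩ := hdom Z hZM
  refine ⟨↥Y, hYcard, fun y n => {a ∈ A n | a ≤ y.1 n}, fun y n =>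
    ⟨fun a ha => ha.1, (Set.finite_Iic (y.1 n)).subset fun a ha => ha.2⟩, ?_⟩
  intro U hUo hxU
  have hUm : U ∈ 𝒰 := by
    letI := τ
    show x ∈ interior U
    rw [hUo.interior_eq]
    exact hxU
  obtain ⟨y, hyY, hy⟩ := hYdom (g U) (mem_image_of_mem g hUm)
  refine ⟨⟨y, hyY⟩, fun n => ?_⟩
  have hmem := Nat.sInf_mem (hne U hUm n)
  exact ⟨sInf (A n ∩ U), hmem.2, hmem.1, hy n⟩
end

section
/- Let X be an M-separable topological space and let ⟨D_n : n ∈ ω⟩ be a decreasing sequence of countable dense subsets of X with fixed enumerations D_n = {d^n_k : k ∈ ω}. Then there exists an increasing function f ∈ ω^ω such that for every nonempty open O ⊆ X the set {n ∈ ω : O ∩ {d^n_k : k ≤ f(n)} ≠ ∅} is infinite. -/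
open Set Topology Filter

/-- A topological space is *M-separable* if for every sequence of dense sets `⟨Dₙ⟩` one can
choose finite `Fₙ ⊆ Dₙ` whose union is dense. -/
def MSeparable (X : Type*) [TopologicalSpace X] : Prop :=
  ∀ D : ℕ → Set X, (∀ n, Dense (D n)) →
    ∃ F : ℕ → Set X, (∀ n, F n ⊆ D n ∧ (F n).Finite) ∧ Dense (⋃ n, F n)

/-- Any finite subset of the range of `g : ℕ → α` is contained in the image of an
initial segment. -/
lemma finite_subset_range_bound {α : Type*} (g : ℕ → α) (S : Set α) (hS : S.Finite)
    (h : S ⊆ Set.range g) : ∃ b, S ⊆ g '' {k | k ≤ b} := by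
  have hx : ∀ x : S, ∃ k, g k = (x : α) := fun x => h x.2
  choose k hk using hx
  haveI : Finite S := hS.to_subtype
  obtain ⟨M, hM⟩ := Finite.exists_le k
  exact ⟨M, fun x hx => ⟨k ⟨x, hx⟩, hM ⟨x, hx⟩, hk ⟨x, hx⟩⟩⟩

/-- if `X` is M-separable and `⟨Dₙ⟩` is a decreasing sequence of countable dense
sets enumerated as `Dₙ = {dⁿₖ : k ∈ ω}`, then there is an increasing `f ∈ ω^ω` such that every
nonempty open `O` meets `{dⁿₖ : k ≤ f(n)}` for infinitely many `n`. -/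
theorem exists_hitting_bound (X : Type*) [TopologicalSpace X] (hX : MSeparable X)
    (d : ℕ → ℕ → X) (hdense : ∀ n, Dense (Set.range (d n)))
    (hdec : ∀ n, Set.range (d (n + 1)) ⊆ Set.range (d n)) :
    ∃ f : ℕ → ℕ, StrictMono f ∧
      ∀ O : Set X, IsOpen O → O.Nonempty →
        {n | (O ∩ d n '' {k | k ≤ f n}).Nonempty}.Infinite := by
  -- the ranges are antitone
  have hanti : Antitone (fun n => Set.range (d n)) := antitone_nat_of_succ_le hdec
  -- for each j, apply M-separability to the sequence n ↦ range (d (max n j))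
  have happ : ∀ j : ℕ, ∃ F : ℕ → Set X,
      (∀ n, F n ⊆ Set.range (d (max n j)) ∧ (F n).Finite) ∧ Dense (⋃ n, F n) :=
    fun j => hX (fun n => Set.range (d (max n j))) (fun n => hdense _)
  choose F hF hFdense using happ
  -- bounds: F j n ⊆ d (max n j) '' {k ≤ b j n}
  have hbd : ∀ j n, ∃ b, F j n ⊆ d (max n j) '' {k | k ≤ b} :=
    fun j n => finite_subset_range_bound _ _ (hF j n).2 (hF j n).1
  choose b hb using hbd
  -- define f
  set M : ℕ → ℕ := fun m =>
    (Finset.range (m + 1) ×ˢ Finset.range (m + 1)).sup fun p => b p.1 p.2 with hM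
  have hMmono : Monotone M := by
    intro m m' hmm
    exact Finset.sup_mono (Finset.product_subset_product
      (Finset.range_subset_range.2 (by omega)) (Finset.range_subset_range.2 (by omega)))
  refine ⟨fun m => m + M m, ?_, ?_⟩
  · apply strictMono_nat_of_lt_succ
    intro m
    have : M m ≤ M (m + 1) := hMmono (by omega)
    omega
  · intro O hO hne
    apply Set.infinite_of_forall_exists_gt
    intro a
    set N := a + 1 with hN
    obtain ⟨x, hxO, hxF⟩ := (hFdense N).inter_open_nonempty O hO hne
    obtain ⟨n, hn⟩ := Set.mem_iUnion.1 hxF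
    set m := max n N with hm
    refine ⟨m, ?_, by omega⟩
    have hx' : x ∈ d m '' {k | k ≤ b N n} := hb N n hn
    obtain ⟨k, hk, hkx⟩ := hx'
    have hble : b N n ≤ m + M m := by
      have : b N n ≤ M m := by
        apply Finset.le_sup (f := fun p : ℕ × ℕ => b p.1 p.2) (b := (N, n))
        simp only [Finset.mem_product, Finset.mem_range]
        omega
      omega
    exact ⟨x, hxO, ⟨k, by simpa using le_trans hk hble, hkx⟩⟩
end

section
/- Let X be a separable topological space and suppose that to every nonempty open set O ⊆ X an infinite set U_O ⊆ ω is assigned in such a way that U_{O∩O'} ⊆ U_O ∩ U_{O'} whenever O ∩ O' ≠ ∅. Let ⟨m_i : i ∈ ω⟩ be a strictly increasing sequence of natural numbers. Then there exists an infinite set A ⊆ ω such that no nonempty open O ⊆ X satisfies U_O ⊆* ⋃_{i∈A} [m_i, m_{i+1}). -/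
open Set Topology Filter

namespace NoAlmostInclusionAux

/-- Index set of blocks `[m i, m (i+1))` that meet `S`. -/
def Ix (m : ℕ → ℕ) (S : Set ℕ) : Set ℕ := {i | (S ∩ Set.Ico (m i) (m (i+1))).Nonempty}

lemma exists_block (m : ℕ → ℕ) (hm : StrictMono m) {k : ℕ} (hk : m 0 ≤ k) :
    ∃ i, m i ≤ k ∧ k < m (i+1) := by
  have hex : ∃ i, k < m (i+1) :=
    ⟨k, lt_of_lt_of_le (Nat.lt_succ_self k) hm.le_apply⟩
  refine ⟨Nat.find hex, ?_, Nat.find_spec hex⟩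
  rcases Nat.eq_zero_or_pos (Nat.find hex) with h | h
  · rw [h]; exact hk
  · have h1 : Nat.find hex - 1 < Nat.find hex := Nat.sub_lt h Nat.one_pos
    have h2 := Nat.find_min hex h1
    have h3 : Nat.find hex - 1 + 1 = Nat.find hex := Nat.succ_pred_eq_of_pos h
    rw [h3] at h2
    omega

lemma block_eq {m : ℕ → ℕ} (hm : StrictMono m) {i j k : ℕ} (hi : m i ≤ k) (hi' : k < m (i+1))
    (hj : m j ≤ k) (hj' : k < m (j+1)) : i = j := by
  rcases lt_trichotomy i j with h | h | h
  · have := hm.monotone (show i + 1 ≤ j by omega); omega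
  · exact h
  · have := hm.monotone (show j + 1 ≤ i by omega); omega

lemma Ix_infinite (m : ℕ → ℕ) (hm : StrictMono m) {S : Set ℕ} (hS : S.Infinite) :
    (Ix m S).Infinite := by
  by_contra h
  rw [Set.not_infinite] at h
  apply hS
  have hsub : S ⊆ Set.Iio (m 0) ∪ ⋃ i ∈ Ix m S, Set.Ico (m i) (m (i+1)) := by
    intro k hk
    by_cases hk0 : k < m 0
    · exact Or.inl hk0
    · obtain ⟨i, h1, h2⟩ := exists_block m hm (le_of_not_gt hk0)
      exact Or.inr (Set.mem_biUnion ⟨k, hk, h1, h2⟩ ⟨h1, h2⟩)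
  exact Set.Finite.subset ((Set.finite_Iio _).union
    (h.biUnion (fun i _ => Set.finite_Ico _ _))) hsub

lemma Ix_diff_finite (m : ℕ → ℕ) (hm : StrictMono m) {S A : Set ℕ}
    (h : (S \ ⋃ i ∈ A, Set.Ico (m i) (m (i+1))).Finite) :
    (Ix m S \ A).Finite := by
  have key : ∀ i, ∃ k, i ∈ Ix m S \ A →
      (k ∈ S \ ⋃ j ∈ A, Set.Ico (m j) (m (j+1))) ∧ m i ≤ k ∧ k < m (i+1) := by
    intro i
    by_cases hi : i ∈ Ix m S \ A
    · obtain ⟨⟨k, hkS, hk1, hk2⟩, hiA⟩ := hi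
      refine ⟨k, fun _ => ⟨⟨hkS, ?_⟩, hk1, hk2⟩⟩
      intro hmem
      rw [Set.mem_iUnion₂] at hmem
      obtain ⟨j, hj, hj1, hj2⟩ := hmem
      exact hiA ((block_eq hm hk1 hk2 hj1 hj2) ▸ hj)
    · exact ⟨0, fun h' => absurd h' hi⟩
  choose f hf using key
  refine Set.Finite.of_finite_image (f := f) (h.subset ?_) ?_
  · rintro k ⟨i, hi, rfl⟩; exact (hf i hi).1
  · intro i hi j hj hij
    have h1 := (hf i hi).2
    have h2 := (hf j hj).2
    rw [hij] at h1
    exact block_eq hm h1.1 h1.2 h2.1 h2.2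

/-- Branch of the binary tree coded as a subset of ℕ. -/
def D (x : ℕ → Bool) : Set ℕ :=
  Set.range (fun n => Encodable.encode (List.ofFn (fun i : Fin n => x i)))

lemma D_inj (x : ℕ → Bool) :
    Function.Injective (fun n => Encodable.encode (List.ofFn (fun i : Fin n => x i))) := by
  intro a b h
  have h2 := Encodable.encode_injective h
  have h3 := congrArg List.length h2
  simpa using h3

lemma D_infinite (x : ℕ → Bool) : (D x).Infinite :=
  Set.infinite_range_of_injective (D_inj x)

lemma D_ad {x y : ℕ → Bool} (hxy : x ≠ y) : (D x ∩ D y).Finite := by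
  obtain ⟨N, hN⟩ : ∃ N, x N ≠ y N := by
    by_contra h; push_neg at h; exact hxy (funext h)
  have hsub : D x ∩ D y ⊆
      (fun n => Encodable.encode (List.ofFn (fun i : Fin n => x i))) '' Set.Iic N := by
    rintro k ⟨⟨a, rfl⟩, ⟨b, hb⟩⟩
    have hlists := Encodable.encode_injective hb
    have hlen : b = a := by
      have := congrArg List.length hlists; simpa using this
    subst hlen
    have hfun : ∀ i : Fin b, y i = x i := by
      intro i
      have h4 := List.ofFn_inj.mp hlists
      exact congrFun h4 i
    have hba : b ≤ N := by
      by_contra hc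
      push_neg at hc
      exact hN ((hfun ⟨N, hc⟩).symm)
    exact ⟨b, hba, rfl⟩
  exact Set.Finite.subset ((Set.finite_Iic N).image _) hsub

lemma not_countable_funBool : ¬ Countable (ℕ → Bool) := by
  intro h
  obtain ⟨f, hf⟩ := exists_surjective_nat (ℕ → Bool)
  obtain ⟨k, hk⟩ := hf (fun n => !f n n)
  have := congrFun hk k
  simp at this

end NoAlmostInclusionAux

open NoAlmostInclusionAux

/-- if `X` is separable and every nonempty open `O ⊆ X` is assigned an infinite
set `U O ⊆ ω` with `U (O ∩ O') ⊆ U O ∩ U O'` whenever `O ∩ O' ≠ ∅`, then for every strictly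
increasing `⟨mᵢ⟩` there is an infinite `A ⊆ ω` such that no nonempty open `O` satisfies
`U O ⊆* ⋃_{i ∈ A} [mᵢ, mᵢ₊₁)`. -/
theorem no_almost_inclusion (X : Type*) [TopologicalSpace X]
    [TopologicalSpace.SeparableSpace X]
    (U : Set X → Set ℕ)
    (hUinf : ∀ O : Set X, IsOpen O → O.Nonempty → (U O).Infinite)
    (hUcap : ∀ O O' : Set X, IsOpen O → IsOpen O' → (O ∩ O').Nonempty →
      U (O ∩ O') ⊆ U O ∩ U O')
    (m : ℕ → ℕ) (hm : StrictMono m) :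
    ∃ A : Set ℕ, A.Infinite ∧
      ∀ O : Set X, IsOpen O → O.Nonempty →
        ¬ (U O \ ⋃ i ∈ A, Set.Ico (m i) (m (i + 1))).Finite := by
  obtain ⟨s, hsc, hsd⟩ := TopologicalSpace.exists_countable_dense X
  set Bad : Set (ℕ → Bool) :=
    {x | ∃ O : Set X, IsOpen O ∧ O.Nonempty ∧ (Ix m (U O) \ D x).Finite} with hBadDef
  have hBadc : Bad.Countable := by
    have hsub : Bad ⊆ ⋃ d ∈ s,
        {x | ∃ O : Set X, IsOpen O ∧ d ∈ O ∧ (Ix m (U O) \ D x).Finite} := by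
      rintro x ⟨O, hO, hOne, hfin⟩
      obtain ⟨d, hds, hdO⟩ := hsd.exists_mem_open hO hOne
      exact Set.mem_biUnion hds ⟨O, hO, hdO, hfin⟩
    refine Set.Countable.mono hsub ?_
    refine Set.Countable.biUnion hsc (fun d _ => ?_)
    refine Set.Subsingleton.countable ?_
    rintro x ⟨O, hO, hdO, hx⟩ y ⟨O', hO', hdO', hy⟩
    by_contra hxy
    have hne : (O ∩ O').Nonempty := ⟨d, hdO, hdO'⟩
    have hinf : (Ix m (U (O ∩ O'))).Infinite :=
      Ix_infinite m hm (hUinf _ (hO.inter hO') hne)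
    apply hinf
    have hsub2 : Ix m (U (O ∩ O')) ⊆
        (Ix m (U O) \ D x) ∪ (Ix m (U O') \ D y) ∪ (D x ∩ D y) := by
      rintro i ⟨k, hkU, hk2⟩
      have h1 : i ∈ Ix m (U O) := ⟨k, (hUcap O O' hO hO' hne hkU).1, hk2⟩
      have h2 : i ∈ Ix m (U O') := ⟨k, (hUcap O O' hO hO' hne hkU).2, hk2⟩
      by_cases hix : i ∈ D x
      · by_cases hiy : i ∈ D y
        · exact Or.inr ⟨hix, hiy⟩
        · exact Or.inl (Or.inr ⟨h2, hiy⟩)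
      · exact Or.inl (Or.inl ⟨h1, hix⟩)
    exact Set.Finite.subset ((hx.union hy).union (D_ad hxy)) hsub2
  obtain ⟨x, hx⟩ : ∃ x, x ∉ Bad := by
    by_contra h
    push_neg at h
    have heq : Bad = Set.univ := Set.eq_univ_of_forall h
    rw [heq, Set.countable_univ_iff] at hBadc
    exact not_countable_funBool hBadc
  refine ⟨D x, D_infinite x, ?_⟩
  intro O hO hOne hfin
  exact hx ⟨O, hO, hOne, Ix_diff_finite m hm hfin⟩
end

section
/- Let X be a topological space, ⟨D_n : n ∈ ω⟩ a decreasing sequence of countable dense subsets of X with enumerations D_n = {d^n_k : k ∈ ω}, and f ∈ ω^ω. For each nonempty open O ⊆ X set U_O = {n ∈ ω : O ∩ {d^n_k : k ≤ f(n)} ≠ ∅}. Let ⟨m_i : i ∈ ω⟩ be a strictly increasing sequence of natural numbers and let {F_α : α < ω₁} be a family of infinite subsets of ω such that for every nonempty open O ⊆ X there exists α < ω₁ with F_α ⊆ ⋃{[m_i, m_{i+1}) : U_O ∩ [m_i, m_{i+1}) ≠ ∅}. Then there exist finite sets K^α_n ⊆ D_n (for α < ω₁ and n ∈ ω) such that for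 every nonempty open O ⊆ X there exists α < ω₁ with O ∩ K^α_n ≠ ∅ for all n ∈ ω. -/
open Set Topology Filter

/-- given a decreasing sequence of countable dense sets `Dₙ = {dⁿₖ : k}`,
`f ∈ ω^ω`, `U_O = {n : O ∩ {dⁿₖ : k ≤ f(n)} ≠ ∅}`, a strictly increasing `⟨mᵢ⟩`, and an
ω₁-family `⟨F_α⟩` of infinite subsets of `ω` such that every nonempty open `O` admits `α`
with `F_α ⊆ ⋃{[mᵢ, mᵢ₊₁) : U_O ∩ [mᵢ, mᵢ₊₁) ≠ ∅}`, there are finite `Kᵅₙ ⊆ Dₙ` such that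
every nonempty open `O` admits `α` with `O ∩ Kᵅₙ ≠ ∅` for all `n`. -/
theorem hitting_from_blocks (X : Type*) [TopologicalSpace X]
    (d : ℕ → ℕ → X) (hdense : ∀ n, Dense (Set.range (d n)))
    (hdec : ∀ n, Set.range (d (n + 1)) ⊆ Set.range (d n))
    (f : ℕ → ℕ) (m : ℕ → ℕ) (hm : StrictMono m)
    (ι : Type*) (hι : Cardinal.mk ι = Cardinal.aleph 1)
    (F : ι → Set ℕ) (hFinf : ∀ α, (F α).Infinite)
    (hF : ∀ O : Set X, IsOpen O → O.Nonempty → ∃ α, F α ⊆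
      ⋃ (i : ℕ) (_ : ({n | (O ∩ d n '' {k | k ≤ f n}).Nonempty} ∩
          Set.Ico (m i) (m (i + 1))).Nonempty),
        Set.Ico (m i) (m (i + 1))) :
    ∃ K : ι → ℕ → Set X,
      (∀ α n, K α n ⊆ Set.range (d n) ∧ (K α n).Finite) ∧
      ∀ O : Set X, IsOpen O → O.Nonempty → ∃ α, ∀ n, (O ∩ K α n).Nonempty := by
  classical
  -- monotone chain of ranges
  have mono : ∀ n n', n ≤ n' → Set.range (d n') ⊆ Set.range (d n) := by
    intro n n' h
    induction n' , h using Nat.le_induction with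
    | base => exact subset_rfl
    | succ k hk ih => exact (hdec k).trans ih
  -- pick a large element of each F α
  choose a haF ham using fun α n => (hFinf α).exists_gt (m n)
  refine ⟨fun α n => ⋃ n' ∈ Set.Icc n (m (a α n + 1)), d n' '' {k | k ≤ f n'}, ?_, ?_⟩
  · intro α n
    constructor
    · intro x hx
      simp only [Set.mem_iUnion] at hx
      obtain ⟨n', ⟨hn1, _⟩, hx⟩ := hx
      exact mono n n' hn1 (Set.image_subset_range _ _ hx)
    · refine (Set.finite_Icc n (m (a α n + 1))).biUnion fun n' _ => ?_
      exact (Set.finite_Iic (f n')).image _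
  · intro O hO hne
    obtain ⟨α, hα⟩ := hF O hO hne
    refine ⟨α, fun n => ?_⟩
    have hmem := hα (haF α n)
    simp only [Set.mem_iUnion] at hmem
    obtain ⟨i, ⟨n', hn'U, hn'lo, hn'hi⟩, hlo, hhi⟩ := hmem
    obtain ⟨x, hxO, hxd⟩ := hn'U
    refine ⟨x, hxO, ?_⟩
    have hilea : i ≤ a α n := le_trans hm.le_apply hlo
    have hn_le : n ≤ n' := by
      have : m n < m (i + 1) := lt_of_lt_of_le (ham α n) hhi.le
      have hni : n < i + 1 := hm.lt_iff_lt.mp this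
      exact le_trans (Nat.lt_succ_iff.mp hni) (le_trans hm.le_apply hn'lo)
    have hn_hi : n' ≤ m (a α n + 1) := by
      exact le_trans hn'hi.le (hm.monotone (by omega))
    simp only [Set.mem_iUnion]
    exact ⟨n', ⟨hn_le, hn_hi⟩, hxd⟩
end

section
/- Let F be a filter on ω with a base {F_α : α < ω₁} consisting of infinite sets (i.e., each F_α ∈ F and every member of F contains some F_α). Assume that for every family 𝒰 of infinite subsets of ω there exists a strictly increasing sequence ⟨m_i : i ∈ ω⟩ such that either (a) for every U ∈ 𝒰 the set ⋃{[m_i, m_{i+1}) : U ∩ [m_i, m_{i+1}) ≠ ∅} belongs to F, or (b) for every infinite A ⊆ ω there exists U ∈ 𝒰 with U ⊆* ⋃_{i∈A} [m_i, m_{i+1}). Then for every M-separable topological space X and every decreasing sequence ⟨D_n : n ∈ ω⟩ of countable dense subsets of X, there exists a family ⟨⟨K^α_n : n ∈ ω⟩ : α < ω₁⟩ such that each K^α_n is a finite subset of D_n and for every nonempty open O ⊆ X there exists α < ω₁ with O ∩ K^α_n ≠ ∅ for all n ∈ ω. -/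
open Set Topology Filter

private lemma good_bound_inf_of_unbdd {s : Set ℕ} (h : ∀ N, ∃ i, N ≤ i ∧ i ∈ s) :
    s.Infinite := by
  intro hfin
  obtain ⟨b, hb⟩ := hfin.bddAbove
  obtain ⟨i, hNi, his⟩ := h (b + 1)
  have := hb his
  omega

private lemma good_bound_block_unique {m : ℕ → ℕ} (hm : StrictMono m) {i j k : ℕ}
    (hi : k ∈ Set.Ico (m i) (m (i + 1))) (hj : k ∈ Set.Ico (m j) (m (j + 1))) : i = j := by
  rcases lt_trichotomy i j with h | h | h
  · have := hm.monotone (show i + 1 ≤ j by omega)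
    simp only [Set.mem_Ico] at hi hj
    omega
  · exact h
  · have := hm.monotone (show j + 1 ≤ i by omega)
    simp only [Set.mem_Ico] at hi hj
    omega

private lemma good_bound_block_exists {m : ℕ → ℕ} (hm : StrictMono m) {N k : ℕ}
    (hk : m N ≤ k) : ∃ i, N ≤ i ∧ m i ≤ k ∧ k < m (i + 1) := by
  have hNk : N ≤ k := le_trans hm.le_apply hk
  set Q : ℕ → Prop := fun j => m j ≤ k with hQ
  have hQN : Q N := hk
  have h1 : Q (Nat.findGreatest Q k) := Nat.findGreatest_spec (P := Q) hNk hQN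
  have h2 : N ≤ Nat.findGreatest Q k := Nat.le_findGreatest (P := Q) hNk hQN
  refine ⟨Nat.findGreatest Q k, h2, h1, ?_⟩
  by_contra hcon
  push_neg at hcon
  have hQsucc : Q (Nat.findGreatest Q k + 1) := hcon
  have h1k : Nat.findGreatest Q k + 1 ≤ k := le_trans hm.le_apply hcon
  exact Nat.findGreatest_is_greatest (P := Q) (by omega) h1k hQsucc

/-- Lemma `good_bound` in abstract form: let `F` be a filter on `ω` with a base
`{F_α : α < ω₁}` of infinite sets, satisfying the dichotomy: for every family `𝒰` of infinite
subsets of `ω` there is a strictly increasing `⟨mᵢ⟩` such that either (a) for every `U ∈ 𝒰`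
the union of the blocks `[mᵢ, mᵢ₊₁)` meeting `U` is in `F`, or (b) for every infinite `A ⊆ ω`
some `U ∈ 𝒰` satisfies `U ⊆* ⋃_{i ∈ A}[mᵢ, mᵢ₊₁)`. Then for every M-separable `X` and every
decreasing sequence `⟨Dₙ⟩` of countable dense subsets of `X` there are finite `Kᵅₙ ⊆ Dₙ`
(`α < ω₁`) such that every nonempty open `O` admits `α` with `O ∩ Kᵅₙ ≠ ∅` for all `n`. -/
theorem good_bound (F : Filter ℕ)
    (ι : Type*) (hι : Cardinal.mk ι = Cardinal.aleph 1)
    (Fb : ι → Set ℕ) (hFb_mem : ∀ α, Fb α ∈ F) (hFb_inf : ∀ α, (Fb α).Infinite)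
    (hFb_base : ∀ S ∈ F, ∃ α, Fb α ⊆ S)
    (hdich : ∀ 𝒰 : Set (Set ℕ), (∀ U ∈ 𝒰, U.Infinite) →
      ∃ m : ℕ → ℕ, StrictMono m ∧
        ((∀ U ∈ 𝒰,
            (⋃ (i : ℕ) (_ : (U ∩ Set.Ico (m i) (m (i + 1))).Nonempty),
              Set.Ico (m i) (m (i + 1))) ∈ F) ∨
         (∀ A : Set ℕ, A.Infinite → ∃ U ∈ 𝒰,
            (U \ ⋃ i ∈ A, Set.Ico (m i) (m (i + 1))).Finite)))
    (X : Type*) [TopologicalSpace X] (hX : MSeparable X)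
    (D : ℕ → Set X) (hD : ∀ n, (D n).Countable ∧ Dense (D n))
    (hdec : ∀ n, D (n + 1) ⊆ D n) :
    ∃ K : ι → ℕ → Set X,
      (∀ α n, K α n ⊆ D n ∧ (K α n).Finite) ∧
      ∀ O : Set X, IsOpen O → O.Nonempty → ∃ α, ∀ n, (O ∩ K α n).Nonempty := by
  classical
  -- the sets `D n` are decreasing
  have hanti : ∀ {p n : ℕ}, p ≤ n → D n ⊆ D p := by
    intro p n hpn
    induction n, hpn using Nat.le_induction with
    | base => exact subset_rfl
    | succ n hpn ih => exact (hdec n).trans ih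
  -- selections for all shifted sequences
  have hsel : ∀ k : ℕ, ∃ G : ℕ → Set X,
      (∀ j, G j ⊆ D (j + k) ∧ (G j).Finite) ∧ Dense (⋃ j, G j) := by
    intro k
    exact hX (fun j => D (j + k)) (fun j => (hD _).2)
  choose G hG1 hG2 using hsel
  -- the combined selection, with all tails dense
  set Fs : ℕ → Set X := fun n => ⋃ k ∈ Set.Iic n, G k (n - k) with hFs
  have hFsub : ∀ n, Fs n ⊆ D n := by
    intro n x hx
    simp only [hFs, Set.mem_iUnion, Set.mem_Iic] at hx
    obtain ⟨k, hk, hxk⟩ := hx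
    have := (hG1 k (n - k)).1 hxk
    rwa [Nat.sub_add_cancel hk] at this
  have hFfin : ∀ n, (Fs n).Finite := by
    intro n
    exact (Set.finite_Iic n).biUnion (fun k _ => (hG1 k (n - k)).2)
  have htail : ∀ t, Dense (⋃ n ∈ {n : ℕ | t ≤ n}, Fs n) := by
    intro t
    refine (hG2 t).mono ?_
    intro x hx
    simp only [Set.mem_iUnion] at hx
    obtain ⟨j, hj⟩ := hx
    simp only [Set.mem_iUnion, Set.mem_setOf_eq]
    refine ⟨j + t, Nat.le_add_left _ _, ?_⟩
    simp only [hFs, Set.mem_iUnion, Set.mem_Iic]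
    exact ⟨t, Nat.le_add_left _ _, by rwa [Nat.add_sub_cancel]⟩
  -- the trace of an open set
  set T : Set X → Set ℕ := fun O => {n | (O ∩ Fs n).Nonempty} with hT
  have hTinf : ∀ O : Set X, IsOpen O → O.Nonempty → (T O).Infinite := by
    intro O hO hne
    apply good_bound_inf_of_unbdd
    intro N
    obtain ⟨x, hxO, hxU⟩ := (htail N).inter_open_nonempty O hO hne
    simp only [Set.mem_iUnion, Set.mem_setOf_eq] at hxU
    obtain ⟨n, hn, hxF⟩ := hxU
    exact ⟨n, hn, ⟨x, hxO, hxF⟩⟩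
  set 𝒰 : Set (Set ℕ) := {U | ∃ O : Set X, IsOpen O ∧ O.Nonempty ∧ U = T O} with h𝒰
  have h𝒰inf : ∀ U ∈ 𝒰, U.Infinite := by
    rintro U ⟨O, hO, hne, rfl⟩
    exact hTinf O hO hne
  obtain ⟨m, hm, hcase⟩ := hdich 𝒰 h𝒰inf
  rcases hcase with ha | hb
  · -- case (a): the main construction
    set P : ι → ℕ → Prop := fun α i => (Fb α ∩ Set.Ico (m i) (m (i + 1))).Nonempty with hP
    have hPinf : ∀ α, {i | P α i}.Infinite := by
      intro α
      apply good_bound_inf_of_unbdd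
      intro N
      -- there is an element of `Fb α` at or above `m N`
      have : ∃ k ∈ Fb α, m N ≤ k := by
        by_contra hcon
        push_neg at hcon
        exact hFb_inf α ((Set.finite_Iio (m N)).subset (fun k hk => hcon k hk))
      obtain ⟨k, hkFb, hk⟩ := this
      obtain ⟨i, hNi, h1, h2⟩ := good_bound_block_exists hm hk
      exact ⟨i, hNi, ⟨k, hkFb, h1, h2⟩⟩
    set β : ι → ℕ → ℕ := fun α t => Nat.nth (P α) t with hβ
    have hβmem : ∀ α t, P α (β α t) := fun α t => Nat.nth_mem_of_infinite (hPinf α) t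
    have hβinj : ∀ α, Function.Injective (β α) := fun α => Nat.nth_injective (hPinf α)
    refine ⟨fun α p => ⋃ n ∈ {n : ℕ | p ≤ n ∧ ∃ t ≤ p,
        n ∈ Set.Ico (m (β α t)) (m (β α t + 1))}, Fs n, ?_, ?_⟩
    · intro α p
      constructor
      · intro x hx
        simp only [Set.mem_iUnion, Set.mem_setOf_eq] at hx
        obtain ⟨n, ⟨hpn, -⟩, hxF⟩ := hx
        exact hanti hpn (hFsub n hxF)
      · apply Set.Finite.biUnion ?_ (fun n _ => hFfin n)
        apply Set.Finite.subset
          ((Set.finite_Iic p).biUnion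
            (fun t _ => Set.finite_Ico (m (β α t)) (m (β α t + 1))))
        rintro n ⟨-, t, ht, hblock⟩
        exact Set.mem_biUnion ht hblock
    · intro O hO hne
      have hTO𝒰 : T O ∈ 𝒰 := ⟨O, hO, hne, rfl⟩
      have henv := ha (T O) hTO𝒰
      obtain ⟨α, hα⟩ := hFb_base _ henv
      refine ⟨α, ?_⟩
      intro p
      -- for each `t ≤ p`, the block `β α t` meets `T O`
      have hex : ∀ t : Fin (p + 1), ∃ n, n ∈ T O ∧
          n ∈ Set.Ico (m (β α (t : ℕ))) (m (β α (t : ℕ) + 1)) := by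
        intro t
        obtain ⟨k, hkFb, hkIco⟩ := hβmem α (t : ℕ)
        have := hα hkFb
        simp only [Set.mem_iUnion] at this
        obtain ⟨i, hne', hkIco'⟩ := this
        have hieq : i = β α (t : ℕ) := good_bound_block_unique hm hkIco' hkIco
        subst hieq
        obtain ⟨n, hnT, hnIco⟩ := hne'
        exact ⟨n, hnT, hnIco⟩
      choose nf hnfT hnfI using hex
      -- pigeonhole: some witness is at least `p`
      have hnf_inj : Function.Injective nf := by
        intro t t' htt
        have hb1 := hnfI t
        have hb2 := hnfI t'
        rw [htt] at hb1
        have := good_bound_block_unique hm hb1 hb2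
        exact Fin.ext (hβinj α this)
      have hbig : ∃ t : Fin (p + 1), p ≤ nf t := by
        by_contra hcon
        push_neg at hcon
        have hcard := Fintype.card_le_of_injective
          (fun t : Fin (p + 1) => (⟨nf t, hcon t⟩ : Fin p)) ?_
        · simp only [Fintype.card_fin] at hcard
          omega
        · intro t t' h
          exact hnf_inj (by simpa using congrArg Fin.val h)
      obtain ⟨t, htp⟩ := hbig
      obtain ⟨x, hxO, hxF⟩ := hnfT t
      refine ⟨x, hxO, ?_⟩
      simp only [Set.mem_iUnion, Set.mem_setOf_eq]
      exact ⟨nf t, ⟨htp, (t : ℕ), Nat.lt_succ_iff.mp t.isLt, hnfI t⟩, hxF⟩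
  · -- case (b): contradiction with separability
    exfalso
    -- an almost disjoint family indexed by `Set ℕ`
    set pref : Set ℕ → ℕ → List Bool :=
      fun s n => (List.range n).map (fun i => if i ∈ s then true else false) with hpref
    set enc : Set ℕ → ℕ → ℕ := fun s n => Encodable.encode (pref s n) with henc
    have hpref_len : ∀ s n, (pref s n).length = n := by
      intro s n; simp [hpref]
    have henc_inj : ∀ s, Function.Injective (enc s) := by
      intro s n n' h
      have := Encodable.encode_injective h
      have := congrArg List.length this
      simpa [hpref_len] using this
    set A : Set ℕ → Set ℕ := fun s => Set.range (enc s) with hA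
    have hAinf : ∀ s, (A s).Infinite := fun s =>
      Set.infinite_range_of_injective (henc_inj s)
    -- almost disjointness
    have hAD : ∀ s s' : Set ℕ, s ≠ s' → (A s ∩ A s').Finite := by
      intro s s' hss
      have hi₀ : ∃ i₀, ¬(i₀ ∈ s ↔ i₀ ∈ s') := by
        by_contra h
        push_neg at h
        exact hss (Set.ext fun i => h i)
      obtain ⟨i₀, hi₀⟩ := hi₀
      apply Set.Finite.subset ((Set.finite_Iic i₀).image (enc s))
      rintro v ⟨⟨n, rfl⟩, ⟨n', hv'⟩⟩
      have hpe : pref s' n' = pref s n := Encodable.encode_injective hv'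
      have hnn : n' = n := by
        have := congrArg List.length hpe
        simpa [hpref_len] using this
      subst hnn
      have hle : n' ≤ i₀ := by
        by_contra hgt
        push_neg at hgt
        have h1 : (pref s' n')[i₀]? = (pref s n')[i₀]? := by rw [hpe]
        simp only [hpref, List.getElem?_map] at h1
        rw [List.getElem?_range hgt] at h1
        simp only [Option.map_some] at h1
        by_cases hs : i₀ ∈ s <;> by_cases hs' : i₀ ∈ s' <;>
          simp [hs, hs'] at h1 hi₀
      exact ⟨n', hle, rfl⟩
    -- witnesses from the dichotomy case (b)
    have hOex : ∀ s : Set ℕ, ∃ O : Set X, IsOpen O ∧ O.Nonempty ∧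
        (T O \ ⋃ i ∈ A s, Set.Ico (m i) (m (i + 1))).Finite := by
      intro s
      obtain ⟨U, hU𝒰, hUfin⟩ := hb (A s) (hAinf s)
      obtain ⟨O, hOo, hOne, rfl⟩ := hU𝒰
      exact ⟨O, hOo, hOne, hUfin⟩
    choose O hOopen hOne hOfin using hOex
    -- the witnesses are pairwise disjoint
    have hOdisj : ∀ s s' : Set ℕ, s ≠ s' → O s ∩ O s' = ∅ := by
      intro s s' hss
      by_contra hcon
      have hWne : (O s ∩ O s').Nonempty := Set.nonempty_iff_ne_empty.mpr hcon
      have hWopen : IsOpen (O s ∩ O s') := (hOopen s).inter (hOopen s')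
      have hWinf := hTinf _ hWopen hWne
      apply hWinf
      have hsub : T (O s ∩ O s') ⊆
          ((T (O s) \ ⋃ i ∈ A s, Set.Ico (m i) (m (i + 1))) ∪
            (T (O s') \ ⋃ i ∈ A s', Set.Ico (m i) (m (i + 1)))) ∪
          (⋃ i ∈ (A s ∩ A s'), Set.Ico (m i) (m (i + 1))) := by
        intro n hn
        obtain ⟨x, ⟨hx1, hx2⟩, hxF⟩ := hn
        have hns : n ∈ T (O s) := ⟨x, hx1, hxF⟩
        have hns' : n ∈ T (O s') := ⟨x, hx2, hxF⟩
        by_cases h1 : n ∈ ⋃ i ∈ A s, Set.Ico (m i) (m (i + 1))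
        · by_cases h2 : n ∈ ⋃ i ∈ A s', Set.Ico (m i) (m (i + 1))
          · right
            simp only [Set.mem_iUnion] at h1 h2 ⊢
            obtain ⟨i, hiA, hni⟩ := h1
            obtain ⟨j, hjA, hnj⟩ := h2
            have := good_bound_block_unique hm hni hnj
            subst this
            exact ⟨i, ⟨hiA, hjA⟩, hni⟩
          · exact Or.inl (Or.inr ⟨hns', h2⟩)
        · exact Or.inl (Or.inl ⟨hns, h1⟩)
      exact Set.Finite.subset
        (((hOfin s).union (hOfin s')).union
          ((hAD s s' hss).biUnion (fun i _ => Set.finite_Ico _ _)))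
        hsub
    -- pick a point of `D 0` in each witness: contradiction with countability
    have hpt : ∀ s : Set ℕ, ∃ x, x ∈ O s ∩ D 0 := by
      intro s
      exact (hD 0).2.inter_open_nonempty (O s) (hOopen s) (hOne s)
    choose Φ hΦ using hpt
    have hΦinj : Function.Injective Φ := by
      intro s s' h
      by_contra hss
      have h1 : Φ s ∈ O s := (hΦ s).1
      have h2 : Φ s ∈ O s' := h ▸ (hΦ s').1
      have : Φ s ∈ O s ∩ O s' := ⟨h1, h2⟩
      rw [hOdisj s s' hss] at this
      exact this
    haveI := ((hD 0).1).to_subtype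
    obtain ⟨g, hg⟩ := Countable.exists_injective_nat ↥(D 0)
    exact Function.cantor_injective (fun s => g ⟨Φ s, (hΦ s).2⟩)
      (fun s s' h => hΦinj (by simpa using congrArg Subtype.val (hg h)))
end

section
/- Let F be a filter on ω such that for every family {x_α : α < ω₁} ⊆ ω^ω there exists b ∈ ω^ω with {n ∈ ω : x_α(n) ≤ b(n)} ∈ F for every α < ω₁. Then for every sequence ⟨D_n : n ∈ ω⟩ of countable sets and every array ⟨A_{α,n} : α < ω₁, n ∈ ω⟩ with each A_{α,n} a finite subset of D_n, there exists a sequence ⟨A_n : n ∈ ω⟩ with each A_n a finite subset of D_n such that {n ∈ ω : A_{α,n} ⊆ A_n} ∈ F for all α < ω₁. -/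
open Set Topology Filter

/-- if `F` is a filter on `ω` such that every ω₁-family in `ω^ω` is dominated
modulo `F` by a single function, then for every sequence `⟨Dₙ⟩` of countable sets and every
ω₁-array `⟨A_{α,n}⟩` of finite subsets `A_{α,n} ⊆ Dₙ` there is a single sequence `⟨Aₙ⟩` of
finite subsets `Aₙ ⊆ Dₙ` with `{n : A_{α,n} ⊆ Aₙ} ∈ F` for all `α`. -/
theorem filter_dominating_finite_sets (F : Filter ℕ)
    (ι : Type*) (hι : Cardinal.mk ι = Cardinal.aleph 1)
    (hdom : ∀ x : ι → ℕ → ℕ, ∃ b : ℕ → ℕ, ∀ α, {n | x α n ≤ b n} ∈ F)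
    (β : Type*) (D : ℕ → Set β) (hD : ∀ n, (D n).Countable)
    (A : ι → ℕ → Set β) (hA : ∀ α n, A α n ⊆ D n ∧ (A α n).Finite) :
    ∃ B : ℕ → Set β, (∀ n, B n ⊆ D n ∧ (B n).Finite) ∧
      ∀ α, {n | A α n ⊆ B n} ∈ F := by
  -- choose an injection of each `D n` into `ℕ`
  have hg : ∀ n, ∃ g : ↥(D n) → ℕ, Function.Injective g := by
    intro n
    have := (hD n).to_subtype
    exact exists_injective_nat ↥(D n)
  choose g hg using hg
  -- extend codes to all of β
  classical
  set c : ℕ → β → ℕ := fun n d => if h : d ∈ D n then g n ⟨d, h⟩ else 0 with hc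
  -- the dominating family
  set x : ι → ℕ → ℕ := fun α n => ((hA α n).2.image (c n)).toFinset.sup id with hx
  obtain ⟨b, hb⟩ := hdom x
  refine ⟨fun n => {d ∈ D n | c n d ≤ b n}, fun n => ?_, fun α => ?_⟩
  · refine ⟨fun d hd => hd.1, ?_⟩
    have hfin : ({y : ↥(D n) | g n y ≤ b n}).Finite := by
      have : {y : ↥(D n) | g n y ≤ b n} = (g n) ⁻¹' (Set.Iic (b n)) := rfl
      rw [this]
      exact Set.Finite.preimage (hg n).injOn (Set.finite_Iic _)
    have : {d ∈ D n | c n d ≤ b n} ⊆ Subtype.val '' {y : ↥(D n) | g n y ≤ b n} := by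
      rintro d ⟨hd, hdb⟩
      refine ⟨⟨d, hd⟩, ?_, rfl⟩
      simpa [hc, hd] using hdb
    exact (hfin.image _).subset this
  · filter_upwards [hb α] with n hn
    intro d hd
    have hdD : d ∈ D n := (hA α n).1 hd
    refine ⟨hdD, ?_⟩
    have hmem : c n d ∈ ((hA α n).2.image (c n)).toFinset := by
      exact (Set.Finite.mem_toFinset _).2 ⟨d, hd, rfl⟩
    calc c n d ≤ x α n := Finset.le_sup (f := id) hmem
      _ ≤ b n := hn
end

section
/- Let F be an ultrafilter on ω with a base {F_β : β < ω₁} (i.e., each F_β ∈ F and every member of F contains some F_β), and assume that for every family {x_α : α < ω₁} ⊆ ω^ω there exists b ∈ ω^ω with {n ∈ ω : x_α(n) ≤ b(n)} ∈ F for all α. Let X and Y be countable topological spaces such that X has property (†) and Y has the following property: for every decreasing sequence ⟨E_n : n ∈ ω⟩ of dense subsets of Y there exists a family ⟨⟨L^α_n : n ∈ ω⟩ : α < ω₁⟩ with each L^α_n a finite subset of E_n such that for every nonempty open V ⊆ Y there exists α < ω₁ with L^α_n ∩ V ≠ ∅ for all n ∈ ω. Then X × Y is M-separable. -/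
open Set Topology Filter

/-- A family of sets is *centered* if every finite subfamily has nonempty intersection. -/
def Centered {X : Type*} (𝒰 : Set (Set X)) : Prop :=
  ∀ V : Finset (Set X), ↑V ⊆ 𝒰 → (⋂₀ (V : Set (Set X))).Nonempty

/-- Property (†): for every ω₁-family `𝖱` of functions `R` assigning to each countable
centered family `𝒰` of open sets a sequence `R(𝒰)` of nonempty finite subsets of `X` with
`R(𝒰)(n) ⊆ U` for all `U ∈ 𝒰` and all but finitely many `n`, there is a family `𝖴` of ω₁
many countable centered families of nonempty open sets such that every nonempty open `O`
admits `𝒰 ∈ Us` such that for every `R ∈ 𝖱` there is `n` with `R(𝒰)(n) ⊆ O`. -/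
def HasDagger (X : Type*) [TopologicalSpace X] : Prop :=
  ∀ (ι : Type) (_ : Cardinal.mk ι = Cardinal.aleph 1)
    (R : ι → Set (Set X) → ℕ → Set X),
    (∀ (α : ι) (𝒰 : Set (Set X)), 𝒰.Countable → (∀ U ∈ 𝒰, IsOpen U) → Centered 𝒰 →
      (∀ n, (R α 𝒰 n).Finite ∧ (R α 𝒰 n).Nonempty) ∧
      (∀ U ∈ 𝒰, ∀ᶠ n in Filter.atTop, R α 𝒰 n ⊆ U)) →
    ∃ Us : Set (Set (Set X)),
      Cardinal.mk Us ≤ Cardinal.aleph 1 ∧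
      (∀ 𝒰 ∈ Us, 𝒰.Countable ∧ (∀ U ∈ 𝒰, IsOpen U ∧ U.Nonempty) ∧ Centered 𝒰) ∧
      ∀ O : Set X, IsOpen O → O.Nonempty →
        ∃ 𝒰 ∈ Us, ∀ α : ι, ∃ n : ℕ, R α 𝒰 n ⊆ O

/-- Lemma `covering_g_delta` in abstract form: let `F` be an ultrafilter on
`ω` with an ω₁-base `{F_β}` such that every ω₁-family in `ω^ω` is dominated modulo `F`. If
`X`, `Y` are countable spaces, `X` has property (†), and `Y` has the ω₁-selection property for
decreasing sequences of dense sets, then `X × Y` is M-separable. -/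
theorem product_M_separable (F : Ultrafilter ℕ)
    (ι : Type) (hι : Cardinal.mk ι = Cardinal.aleph 1)
    (Fb : ι → Set ℕ) (hFb_mem : ∀ β, Fb β ∈ F)
    (hFb_base : ∀ S ∈ F, ∃ β, Fb β ⊆ S)
    (hdom : ∀ x : ι → ℕ → ℕ, ∃ b : ℕ → ℕ, ∀ α, {n | x α n ≤ b n} ∈ F)
    (X Y : Type*) [TopologicalSpace X] [TopologicalSpace Y]
    [Countable X] [Countable Y]
    (hX : HasDagger X)
    (hY : ∀ E : ℕ → Set Y, (∀ n, E (n + 1) ⊆ E n) → (∀ n, Dense (E n)) →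
      ∃ L : ι → ℕ → Set Y, (∀ α n, L α n ⊆ E n ∧ (L α n).Finite) ∧
        ∀ V : Set Y, IsOpen V → V.Nonempty → ∃ α, ∀ n, (L α n ∩ V).Nonempty) :
    MSeparable (X × Y) := by
  classical
  intro D hD
  by_cases hne : Nonempty (X × Y)
  swap
  · exact ⟨fun _ => ∅, fun n => ⟨empty_subset _, finite_empty⟩, fun p => absurd ⟨p⟩ hne⟩
  obtain ⟨⟨x0, y0⟩⟩ := hne
  haveI : Nonempty Y := ⟨y0⟩
  haveI : Nonempty X := ⟨x0⟩
  -- each Fb β is infinite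
  have hFbInf : ∀ β, (Fb β).Infinite := by
    intro β
    by_contra hfin
    rw [Set.not_infinite] at hfin
    obtain ⟨a, -, hFa⟩ := Ultrafilter.eq_pure_of_finite_mem hfin (hFb_mem β)
    haveI : Infinite ι := Cardinal.infinite_iff.mpr (by rw [hι]; exact Cardinal.aleph0_le_aleph 1)
    set f := Infinite.natEmbedding ι with hf
    obtain ⟨b, hb⟩ := hdom (fun α _ => if h : ∃ j, f j = α then h.choose else 0)
    have h1 := hb (f (b a + 1))
    rw [hFa, Ultrafilter.mem_pure] at h1
    simp only [Set.mem_setOf_eq] at h1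
    rw [dif_pos ⟨b a + 1, rfl⟩] at h1
    have h2 : f (⟨b a + 1, rfl⟩ : ∃ j, f j = f (b a + 1)).choose = f (b a + 1) :=
      (⟨b a + 1, rfl⟩ : ∃ j, f j = f (b a + 1)).choose_spec
    have h3 := f.injective h2
    omega
  -- next element of Fb β at or after n
  have hnxt : ∀ (β : ι) (n : ℕ), ∃ k, k ∈ Fb β ∧ n ≤ k := by
    intro β n
    obtain ⟨k, hk, hk2⟩ := (hFbInf β).exists_gt n
    exact ⟨k, hk, hk2.le⟩
  choose nxt hnxtmem hnxtge using hnxt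
  -- injective enumeration of X × Y
  obtain ⟨e, he⟩ := (countable_iff_exists_injective (X × Y)).mp inferInstance
  -- good families
  set Good : Set (Set X) → Prop :=
    fun 𝒰 => 𝒰.Countable ∧ (∀ U ∈ 𝒰, IsOpen U) ∧ Centered 𝒰 with hGooddef
  -- enumerations of countable families
  have hu : ∀ 𝒰 : Set (Set X), ∃ u : ℕ → Set X,
      (𝒰.Nonempty → 𝒰.Countable → (∀ i, u i ∈ 𝒰) ∧ (∀ U ∈ 𝒰, ∃ i, u i = U)) ∧
      (¬𝒰.Nonempty → ∀ i, u i = univ) := by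
    intro 𝒰
    by_cases h : 𝒰.Nonempty ∧ 𝒰.Countable
    · obtain ⟨u, hu⟩ := h.2.exists_eq_range h.1
      refine ⟨u, fun _ _ => ⟨fun i => hu ▸ mem_range_self i, fun U hU => ?_⟩,
        fun hne => absurd h.1 hne⟩
      rw [hu, mem_range] at hU
      obtain ⟨i, hi⟩ := hU
      exact ⟨i, hi⟩
    · exact ⟨fun _ => univ, fun h1 h2 => absurd ⟨h1, h2⟩ h, fun _ _ => rfl⟩
  choose u hu1 hu2 using hu
  -- finite intersections
  set W : Set (Set X) → ℕ → Set X := fun 𝒰 n => ⋂ i ∈ Finset.range n, u 𝒰 i with hWdef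
  have hWopen : ∀ 𝒰, Good 𝒰 → ∀ n, IsOpen (W 𝒰 n) := by
    intro 𝒰 hG n
    apply isOpen_biInter_finset
    intro i _
    by_cases hne : 𝒰.Nonempty
    · exact hG.2.1 _ ((hu1 𝒰 hne hG.1).1 i)
    · rw [hu2 𝒰 hne i]; exact isOpen_univ
  have hWne : ∀ 𝒰, Good 𝒰 → ∀ n, (W 𝒰 n).Nonempty := by
    intro 𝒰 hG n
    by_cases hne : 𝒰.Nonempty
    · obtain ⟨x, hx⟩ := hG.2.2 ((Finset.range n).image (u 𝒰)) (by
        intro t ht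
        simp only [Finset.coe_image, Set.mem_image, Finset.mem_coe, Finset.mem_range] at ht
        obtain ⟨i, -, rfl⟩ := ht
        exact (hu1 𝒰 hne hG.1).1 i)
      refine ⟨x, ?_⟩
      simp only [hWdef, Set.mem_iInter]
      intro i hi
      exact Set.mem_sInter.mp hx _ (Finset.mem_coe.mpr (Finset.mem_image_of_mem _ hi))
    · refine ⟨x0, ?_⟩
      simp only [hWdef, Set.mem_iInter]
      intro i hi
      rw [hu2 𝒰 hne i]; trivial
  have hWanti : ∀ 𝒰 (m n : ℕ), m ≤ n → W 𝒰 n ⊆ W 𝒰 m := by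
    intro 𝒰 m n hmn x hx
    simp only [hWdef, Set.mem_iInter, Finset.mem_range] at hx ⊢
    intro i hi
    exact hx i (lt_of_lt_of_le hi hmn)
  have hWsub : ∀ 𝒰, Good 𝒰 → ∀ U ∈ 𝒰, ∃ i, ∀ n, i < n → W 𝒰 n ⊆ U := by
    intro 𝒰 hG U hU
    obtain ⟨i, hi⟩ := (hu1 𝒰 ⟨U, hU⟩ hG.1).2 U hU
    refine ⟨i, fun n hin x hx => ?_⟩
    simp only [hWdef, Set.mem_iInter, Finset.mem_range] at hx
    exact hi ▸ hx i hin
  -- the dense sets in Y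
  set E : Set (Set X) → ℕ → Set Y :=
    fun 𝒰 n => {y | ∃ m, n ≤ m ∧ ∃ x ∈ W 𝒰 n, (x, y) ∈ D m} with hEdef
  have hEdec : ∀ 𝒰 n, E 𝒰 (n + 1) ⊆ E 𝒰 n := by
    intro 𝒰 n y hy
    simp only [hEdef, mem_setOf_eq] at hy ⊢
    obtain ⟨m, hm, x, hxW, hxD⟩ := hy
    exact ⟨m, by omega, x, hWanti 𝒰 n (n + 1) (by omega) hxW, hxD⟩
  have hEdense : ∀ 𝒰, Good 𝒰 → ∀ n, Dense (E 𝒰 n) := by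
    intro 𝒰 hG n
    rw [dense_iff_inter_open]
    intro V hV hVne
    obtain ⟨⟨px, py⟩, hp⟩ := dense_iff_inter_open.mp (hD n) (W 𝒰 n ×ˢ V)
      ((hWopen 𝒰 hG n).prod hV) ((hWne 𝒰 hG n).prod hVne)
    refine ⟨py, hp.1.2, ?_⟩
    simp only [hEdef, mem_setOf_eq]
    exact ⟨n, le_rfl, px, hp.1.1, hp.2⟩
  -- apply hY to each good family
  have hLex : ∀ 𝒰, Good 𝒰 → ∃ L : ι → ℕ → Set Y,
      (∀ α n, L α n ⊆ E 𝒰 n ∧ (L α n).Finite) ∧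
      ∀ V : Set Y, IsOpen V → V.Nonempty → ∃ α, ∀ n, (L α n ∩ V).Nonempty :=
    fun 𝒰 hG => hY (E 𝒰) (hEdec 𝒰) (hEdense 𝒰 hG)
  choose! L hL1 hL2 using hLex
  -- default points
  have hystar : ∀ 𝒰, Good 𝒰 → ∀ n : ℕ, ∃ y, y ∈ E 𝒰 n :=
    fun 𝒰 hG n => (hEdense 𝒰 hG n).nonempty
  choose! ystar hystarE using hystar
  -- witnesses
  have hwit : ∀ 𝒰 (n : ℕ) (y : Y), y ∈ E 𝒰 n →
      ∃ x m, n ≤ m ∧ x ∈ W 𝒰 n ∧ (x, y) ∈ D m := by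
    intro 𝒰 n y hy
    simp only [hEdef, mem_setOf_eq] at hy
    obtain ⟨m, hm, x, hxW, hxD⟩ := hy
    exact ⟨x, m, hm, hxW, hxD⟩
  choose! xw mw hmw hxwW hxwD using hwit
  -- the enriched selections
  set LL : ι → Set (Set X) → ℕ → Set Y :=
    fun α 𝒰 n => insert (ystar 𝒰 n) (L 𝒰 α n) with hLLdef
  have hLLfin : ∀ 𝒰, Good 𝒰 → ∀ (α : ι) (n : ℕ), (LL α 𝒰 n).Finite :=
    fun 𝒰 hG α n => ((hL1 𝒰 hG α n).2).insert _
  have hLLE : ∀ 𝒰, Good 𝒰 → ∀ (α : ι) (n : ℕ), LL α 𝒰 n ⊆ E 𝒰 n := by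
    intro 𝒰 hG α n
    simp only [hLLdef]
    exact insert_subset (hystarE 𝒰 hG n) (hL1 𝒰 hG α n).1
  -- a pairing equivalence
  have hcard : Cardinal.mk ι = Cardinal.mk (ι × ι) := by
    rw [Cardinal.mk_prod, Cardinal.lift_id, hι,
      Cardinal.mul_eq_self (Cardinal.aleph0_le_aleph 1)]
  obtain ⟨e2⟩ := Cardinal.eq.mp hcard
  -- the response functions
  set R : ι → Set (Set X) → ℕ → Set X := fun γ 𝒰 n =>
    if Good 𝒰 then
      (fun y => xw 𝒰 (nxt (e2 γ).2 n) y) '' LL (e2 γ).1 𝒰 (nxt (e2 γ).2 n)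
    else ∅ with hRdef
  have hRhyp : ∀ (γ : ι) (𝒰 : Set (Set X)), 𝒰.Countable → (∀ U ∈ 𝒰, IsOpen U) →
      Centered 𝒰 → (∀ n, (R γ 𝒰 n).Finite ∧ (R γ 𝒰 n).Nonempty) ∧
      (∀ U ∈ 𝒰, ∀ᶠ n in Filter.atTop, R γ 𝒰 n ⊆ U) := by
    intro γ 𝒰 hc ho hcen
    have hG : Good 𝒰 := ⟨hc, ho, hcen⟩
    constructor
    · intro n
      simp only [hRdef, if_pos hG]
      exact ⟨(hLLfin 𝒰 hG _ _).image _,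
        Set.Nonempty.image _ ⟨ystar 𝒰 _, mem_insert _ _⟩⟩
    · intro U hU
      obtain ⟨i, hi⟩ := hWsub 𝒰 hG U hU
      rw [eventually_atTop]
      refine ⟨i + 1, fun n hn => ?_⟩
      simp only [hRdef, if_pos hG]
      rintro x ⟨y, hy, rfl⟩
      have hk : i < nxt (e2 γ).2 n := lt_of_lt_of_le (by omega) (hnxtge _ n)
      exact hi _ hk (hxwW 𝒰 _ y (hLLE 𝒰 hG _ _ hy))
  -- apply the dagger property
  obtain ⟨Us, hUscard, hUsgood, hUscov⟩ := hX ι hι R hRhyp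
  have hUsGood : ∀ 𝒰 ∈ Us, Good 𝒰 := fun 𝒰 h =>
    ⟨(hUsgood 𝒰 h).1, fun U hU => ((hUsgood 𝒰 h).2.1 U hU).1, (hUsgood 𝒰 h).2.2⟩
  obtain ⟨𝒰₀, h𝒰₀, -⟩ := hUscov univ isOpen_univ ⟨x0, trivial⟩
  haveI : Nonempty ↥Us := ⟨⟨𝒰₀, h𝒰₀⟩⟩
  -- embed Us into ι
  have hemb : Nonempty (↥Us ↪ ι) := by
    rw [← Cardinal.lift_mk_le']
    refine le_trans (Cardinal.lift_le.mpr hUscard) ?_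
    rw [hι]
    simp [Cardinal.lift_aleph]
  obtain ⟨emb⟩ := hemb
  have hgsurj : Function.Surjective (Function.invFun emb) :=
    Function.invFun_surjective emb.injective
  -- size functions
  set c : ι × ↥Us → ℕ → ℕ := fun p k =>
    sSup ((fun y => e (xw (p.2 : Set (Set X)) k y, y)) '' LL p.1 (p.2 : Set (Set X)) k)
    with hcdef
  have hc_le : ∀ (α : ι) (s : ↥Us) (k : ℕ) (y : Y),
      y ∈ LL α (s : Set (Set X)) k → e (xw (s : Set (Set X)) k y, y) ≤ c (α, s) k := by
    intro α s k y hy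
    apply le_csSup
    · exact (((hLLfin _ (hUsGood _ s.2) α k).image _)).bddAbove
    · exact mem_image_of_mem _ hy
  obtain ⟨b, hb⟩ := hdom (fun γ => c ((e2 γ).1, Function.invFun emb (e2 γ).2))
  have hbS : ∀ (α : ι) (s : ↥Us), {n | c (α, s) n ≤ b n} ∈ F := by
    intro α s
    have h1 := hb (e2.symm (α, emb s))
    simpa [Equiv.apply_symm_apply, Function.leftInverse_invFun emb.injective s] using h1
  -- the final selection
  set B : ℕ → ℕ := fun j => (Finset.range (j + 1)).sup b with hBdef
  refine ⟨fun j => D j ∩ {q | e q ≤ B j}, fun j => ⟨inter_subset_left, ?_⟩, ?_⟩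
  · exact Set.Finite.inter_of_right ((Set.finite_Iic (B j)).preimage he.injOn) (D j)
  · rw [dense_iff_inter_open]
    intro O hO hOne
    obtain ⟨⟨x, y⟩, hxyO⟩ := hOne
    obtain ⟨U, V, hUo, hVo, hxU, hyV, hUVsub⟩ := isOpen_prod_iff.mp hO x y hxyO
    obtain ⟨𝒰, h𝒰Us, hγ⟩ := hUscov U hUo ⟨x, hxU⟩
    have hG : Good 𝒰 := hUsGood 𝒰 h𝒰Us
    obtain ⟨α, hα⟩ := hL2 𝒰 hG V hVo ⟨y, hyV⟩
    obtain ⟨β, hβ⟩ := hFb_base {n | c (α, ⟨𝒰, h𝒰Us⟩) n ≤ b n} (hbS α ⟨𝒰, h𝒰Us⟩)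
    obtain ⟨n, hn⟩ := hγ (e2.symm (α, β))
    have hkS : c (α, ⟨𝒰, h𝒰Us⟩) (nxt β n) ≤ b (nxt β n) := hβ (hnxtmem β n)
    obtain ⟨y', hy'⟩ := hα (nxt β n)
    have hy'LL : y' ∈ LL α 𝒰 (nxt β n) := mem_insert_of_mem _ hy'.1
    have hy'E : y' ∈ E 𝒰 (nxt β n) := (hL1 𝒰 hG α (nxt β n)).1 hy'.1
    have hx'U : xw 𝒰 (nxt β n) y' ∈ U := by
      apply hn
      simp only [hRdef, if_pos hG, Equiv.apply_symm_apply]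
      exact mem_image_of_mem _ hy'LL
    have hpD : (xw 𝒰 (nxt β n) y', y') ∈ D (mw 𝒰 (nxt β n) y') := hxwD 𝒰 (nxt β n) y' hy'E
    have hkm : nxt β n ≤ mw 𝒰 (nxt β n) y' := hmw 𝒰 (nxt β n) y' hy'E
    have hep : e (xw 𝒰 (nxt β n) y', y') ≤ B (mw 𝒰 (nxt β n) y') := by
      refine le_trans (le_trans (hc_le α ⟨𝒰, h𝒰Us⟩ (nxt β n) y' hy'LL) hkS) ?_
      exact Finset.le_sup (Finset.mem_range.mpr (by omega))
    refine ⟨(xw 𝒰 (nxt β n) y', y'), hUVsub ⟨hx'U, hy'.2⟩, ?_⟩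
    exact mem_iUnion.mpr ⟨mw 𝒰 (nxt β n) y', hpD, hep⟩
end

section
/- The Fréchet–Urysohn fan S_ω is M-separable. -/
open Set Topology Filter

/-- The subspace `T = ω × ({0} ∪ {1/(n+1) : n ∈ ω})` of `ℝ²`. -/
def fanT : Set (ℝ × ℝ) :=
  {p | (∃ n : ℕ, p.1 = n) ∧ (p.2 = 0 ∨ ∃ m : ℕ, p.2 = 1 / (m + 1))}

/-- The equivalence relation on `T` identifying all points of `ω × {0}`. -/
def fanSetoid : Setoid ↥fanT where
  r p q := p = q ∨ ((p : ℝ × ℝ).2 = 0 ∧ (q : ℝ × ℝ).2 = 0)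
  iseqv := by
    constructor
    · intro p
      exact Or.inl rfl
    · intro p q h
      rcases h with h | h
      · exact Or.inl h.symm
      · exact Or.inr ⟨h.2, h.1⟩
    · intro p q r hpq hqr
      rcases hpq with h | h
      · subst h
        exact hqr
      · rcases hqr with h' | h'
        · exact Or.inr ⟨h.1, h' ▸ h.2⟩
        · exact Or.inr ⟨h.1, h'.2⟩

/-- The Fréchet–Urysohn fan `S_ω`, the quotient of `T` collapsing `ω × {0}` to a point,
with the quotient topology. -/
def FrechetUrysohnFan : Type := Quotient fanSetoid

instance : TopologicalSpace FrechetUrysohnFan :=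
  instTopologicalSpaceQuotient

/-! Every dense set contains every isolated point. The points `(n, 1/(m+1))` of the fan are
isolated and form a countable dense set, so choosing the `n`-th of them as `Fₙ` works for any
sequence of dense sets. -/

theorem Dense.mem_of_isOpen_singleton {X : Type*} [TopologicalSpace X] {D : Set X}
    (hD : Dense D) {x : X} (hx : IsOpen ({x} : Set X)) : x ∈ D := by
  obtain ⟨y, rfl, hy⟩ := hD.inter_open_nonempty {x} hx (singleton_nonempty x)
  exact hy

theorem mseparable_of_countable_dense_isolated {X : Type*} [TopologicalSpace X] {S : Set X}
    (hSc : S.Countable) (hSd : Dense S) (hS : ∀ x ∈ S, IsOpen ({x} : Set X)) :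
    MSeparable X := by
  intro D hD
  cases isEmpty_or_nonempty X
  · exact ⟨fun _ => ∅, fun _ => ⟨empty_subset _, finite_empty⟩, fun x => isEmptyElim x⟩
  obtain ⟨f, hf⟩ := countable_iff_exists_subset_range.mp hSc
  refine ⟨fun n => {f n} ∩ S, fun n => ⟨?_, (finite_singleton _).inter_of_left _⟩, hSd.mono ?_⟩
  · rintro _ ⟨rfl, hx⟩
    exact (hD n).mem_of_isOpen_singleton (hS _ hx)
  · intro x hx
    obtain ⟨n, rfl⟩ := hf hx
    exact mem_iUnion.mpr ⟨n, rfl, hx⟩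

theorem Nat.eq_of_cast_mem_Ioo_half {k n : ℕ} (h : (k : ℝ) ∈ Ioo ((n : ℝ) - 1 / 2) (n + 1 / 2)) :
    k = n := by
  have hlt : k < n + 1 := by exact_mod_cast (by linarith [h.2] : (k : ℝ) < n + 1)
  have hgt : n < k + 1 := by exact_mod_cast (by linarith [h.1] : (n : ℝ) < k + 1)
  omega

noncomputable def fanPt (n m : ℕ) : fanT :=
  ⟨((n : ℝ), 1 / (m + 1)), ⟨n, rfl⟩, Or.inr ⟨m, rfl⟩⟩

theorem isOpen_singleton_fanPt (n m : ℕ) : IsOpen ({fanPt n m} : Set fanT) := by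
  rw [isOpen_induced_iff]
  refine ⟨Ioo ((n : ℝ) - 1 / 2) (n + 1 / 2) ×ˢ Ioo (1 / (m + 3 / 2 : ℝ)) (1 / (m + 1 / 2 : ℝ)),
    isOpen_Ioo.prod isOpen_Ioo, ?_⟩
  ext ⟨⟨x, y⟩, ⟨k, hk⟩, hy⟩
  obtain rfl : x = k := hk
  dsimp only at hy
  simp only [mem_preimage, mem_prod, mem_singleton_iff, fanPt, Subtype.ext_iff, Prod.ext_iff,
    Nat.cast_inj]
  constructor
  · rintro ⟨hkn, hyl, hyu⟩
    refine ⟨Nat.eq_of_cast_mem_Ioo_half hkn, ?_⟩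
    rcases hy with rfl | ⟨j, rfl⟩
    · exact absurd hyl (not_lt.mpr (one_div_pos.mpr (by positivity)).le)
    rw [one_div_lt_one_div (by positivity) (by positivity)] at hyl hyu
    have hj : j + 1 = m + 1 :=
      Nat.eq_of_cast_mem_Ioo_half ⟨by push_cast; linarith, by push_cast; linarith⟩
    rw [Nat.succ_injective hj]
  · rintro ⟨rfl, rfl⟩
    refine ⟨⟨by linarith, by linarith⟩, ?_, ?_⟩ <;>
      rw [one_div_lt_one_div (by positivity) (by positivity)] <;> linarith

theorem isOpen_singleton_mk_fanPt (n m : ℕ) :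
    IsOpen ({Quotient.mk fanSetoid (fanPt n m)} : Set FrechetUrysohnFan) := by
  have hpre : Quotient.mk fanSetoid ⁻¹' {Quotient.mk fanSetoid (fanPt n m)} = {fanPt n m} := by
    ext q
    simp only [mem_preimage, mem_singleton_iff, Quotient.eq]
    refine ⟨?_, fun h => Or.inl h⟩
    rintro (h | ⟨-, h⟩)
    · exact h
    · exact absurd h (one_div_pos.mpr (by positivity)).ne'
  exact isOpen_coinduced.mpr (hpre ▸ isOpen_singleton_fanPt n m)

theorem dense_range_fanPt : Dense (range fun p : ℕ × ℕ => fanPt p.1 p.2) := by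
  rintro ⟨⟨x, y⟩, ⟨k, hk⟩, hy⟩
  obtain rfl : x = k := hk
  dsimp only at hy
  rcases hy with rfl | ⟨j, rfl⟩
  · have hlim : Tendsto (fanPt k) atTop (𝓝 ⟨((k : ℝ), 0), ⟨k, rfl⟩, Or.inl rfl⟩) :=
      tendsto_subtype_rng.mpr
        (tendsto_const_nhds.prodMk_nhds tendsto_one_div_add_atTop_nhds_zero_nat)
    exact mem_closure_of_tendsto hlim (Eventually.of_forall fun M => ⟨(k, M), rfl⟩)
  · exact subset_closure ⟨(k, j), rfl⟩

theorem dense_range_mk_fanPt :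
    Dense (range fun p : ℕ × ℕ => Quotient.mk fanSetoid (fanPt p.1 p.2)) := by
  have h := (Quotient.mk_surjective (s := fanSetoid)).denseRange.dense_image
    continuous_quotient_mk' dense_range_fanPt
  rwa [← range_comp] at h

/-- the Fréchet–Urysohn fan `S_ω` is M-separable. -/
theorem fan_mseparable : MSeparable FrechetUrysohnFan :=
  mseparable_of_countable_dense_isolated (countable_range _) dense_range_mk_fanPt
    (by rintro _ ⟨⟨n, m⟩, rfl⟩; exact isOpen_singleton_mk_fanPt n m)
end
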